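/- arXiv:2407.14168 — 5 statements merged into one kernel-verified Lean document; each statement's English description precedes it below -/
import Mathlib

section
/- Let α = {α_n}_{n≥1} ⊂ (0,1) be a sequence of ratios with associated generalized Cantor set C ⊂ [0,1], and let l_n denote the common length of the 2^{n-1} open intervals removed at stage n. If there exists δ ∈ (0,1) such that ∑_{n=1}^∞ l_n^{1/4^{n/δ}} < ∞, then there exists a constant λ > 0 such that for every ξ ≠ 0, |(χ_C)^(ξ)|² ≤ λ·(1 + (log(1+|ξ|))^δ)/|ξ|², where (χ_C)^ is the Fourier transform of the indicator function of C. -/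
/-!
Approximate `C` by the stage `C_N`. The Fourier transform of `χ_{C_N}` is a sum of `2 ^ N`
transforms of intervals, each of modulus at most `1 / (π |ξ|)`, while `χ_C` and `χ_{C_N}` differ on
a set of measure at most `∑_{n ≥ N} 2 ^ n l_n`. Summability forces `l_n ≤ 2 ^ (-y ^ (n + 1))`
eventually, where `y = 4 ^ (1 / δ)`, and then this tail is at most `2 ^ (-y ^ N)`. Taking `N` with
`y ^ N` just above `2 log (1 + |ξ|)` makes the tail at most `1 / |ξ|`, while
`4 ^ N = (y ^ N) ^ δ` stays of order `log (1 + |ξ|) ^ δ`.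
-/

open MeasureTheory

/-- Length of each of the `2^n` closed intervals making up the `n`-th stage `Cₙ`
of the generalized Cantor construction with ratios `α` (indexed from `0`,
so `α n` is the ratio `α_{n+1}` of the paper). -/
noncomputable def stageLen (α : ℕ → ℝ) : ℕ → ℝ
  | 0 => 1
  | n + 1 => stageLen α n * (1 - α n) / 2

/-- Left endpoints of the `2^n` closed intervals making up the `n`-th stage,
indexed by `b : Fin n → Bool` (`false` = left child, `true` = right child). -/
noncomputable def leftPt (α : ℕ → ℝ) : (n : ℕ) → (Fin n → Bool) → ℝ
  | 0, _ => 0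
  | n + 1, b =>
      leftPt α n (fun i => b i.castSucc) +
        (if b (Fin.last n) then stageLen α n - stageLen α (n + 1) else 0)

/-- The `n`-th stage `Cₙ` of the generalized Cantor construction: `C₀ = [0,1]`,
and `C_{n+1}` is obtained from `Cₙ` by removing the open middle `α_{n+1}`-th
of each of its `2^n` component closed intervals. -/
noncomputable def cantorStage (α : ℕ → ℝ) (n : ℕ) : Set ℝ :=
  ⋃ b : Fin n → Bool, Set.Icc (leftPt α n b) (leftPt α n b + stageLen α n)

/-- The generalized Cantor set `C = ⋂ₙ Cₙ` associated with the ratios `α`. -/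
noncomputable def gCantorSet (α : ℕ → ℝ) : Set ℝ :=
  ⋂ n, cantorStage α n

/-- The common length of the `2^n` open intervals removed when passing from `Cₙ`
to `C_{n+1}`; this is the quantity `l_{n+1}` of the paper. -/
noncomputable def removedLen (α : ℕ → ℝ) (n : ℕ) : ℝ :=
  stageLen α n * α n

open Real

section Fourier

lemma fourier_indicator_eq_setIntegral {S : Set ℝ} (hS : MeasurableSet S) (ξ : ℝ) :
    FourierTransform.fourier (S.indicator fun _ => (1 : ℂ)) ξ =
      ∫ x in S, (fourierChar (-(x * ξ)) : ℂ) := by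
  rw [fourier_real_eq, ← integral_indicator hS]
  congr 1 with x
  by_cases hx : x ∈ S <;> simp [hx, Circle.smul_def]

lemma norm_setIntegral_Icc_fourierChar_le {ξ : ℝ} (hξ : ξ ≠ 0) (a b : ℝ) :
    ‖∫ x in Set.Icc a b, (fourierChar (-(x * ξ)) : ℂ)‖ ≤ 1 / (π * |ξ|) := by
  rcases lt_or_ge b a with hba | hab
  · simp [Set.Icc_eq_empty_of_lt hba]
    positivity
  set c : ℂ := ↑(-2 * π * ξ) * Complex.I
  have hc : ‖c‖ = 2 * π * |ξ| := by
    simp [c, abs_of_pos pi_pos]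
  have hc0 : c ≠ 0 := norm_pos_iff.1 (by rw [hc]; have := pi_pos; positivity)
  have hexp (x : ℝ) : (fourierChar (-(x * ξ)) : ℂ) = Complex.exp (c * x) := by
    simp only [c, fourierChar_apply]; push_cast; ring_nf
  have hnorm (x : ℝ) : ‖Complex.exp (c * x)‖ = 1 := by
    rw [← hexp, Circle.norm_coe]
  calc ‖∫ x in Set.Icc a b, (fourierChar (-(x * ξ)) : ℂ)‖
      = ‖(Complex.exp (c * b) - Complex.exp (c * a)) / c‖ := by
        rw [← integral_exp_mul_complex hc0, intervalIntegral.integral_of_le hab,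
          ← integral_Icc_eq_integral_Ioc]
        simp_rw [hexp]
    _ ≤ (‖Complex.exp (c * b)‖ + ‖Complex.exp (c * a)‖) / (2 * π * |ξ|) := by
        rw [norm_div, hc]
        gcongr
        exact norm_sub_le _ _
    _ = 1 / (π * |ξ|) := by
        rw [hnorm, hnorm]
        field_simp
        ring

lemma norm_fourier_indicator_iUnion_Icc_le {ι : Type*} [Fintype ι] {a b : ι → ℝ}
    (hd : Pairwise (Function.onFun Disjoint fun i => Set.Icc (a i) (b i))) {ξ : ℝ} (hξ : ξ ≠ 0) :
    ‖FourierTransform.fourier ((⋃ i, Set.Icc (a i) (b i)).indicator fun _ => (1 : ℂ)) ξ‖ ≤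
      Fintype.card ι / (π * |ξ|) := by
  have hcont : Continuous fun x : ℝ => (fourierChar (-(x * ξ)) : ℂ) := by fun_prop
  rw [fourier_indicator_eq_setIntegral (.iUnion fun _ => measurableSet_Icc),
    integral_iUnion_fintype (fun _ => measurableSet_Icc) hd
      fun _ => hcont.integrableOn_Icc]
  calc ‖∑ i, ∫ x in Set.Icc (a i) (b i), (fourierChar (-(x * ξ)) : ℂ)‖
      ≤ ∑ _i : ι, 1 / (π * |ξ|) :=
        (norm_sum_le _ _).trans <| Finset.sum_le_sum fun i _ =>
          norm_setIntegral_Icc_fourierChar_le hξ _ _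
    _ = Fintype.card ι / (π * |ξ|) := by simp [div_eq_mul_inv]

lemma norm_fourier_indicator_sub_le {A B : Set ℝ} (hA : MeasurableSet A) (hB : MeasurableSet B)
    (hBA : B ⊆ A) (hA_fin : volume A ≠ ⊤) (ξ : ℝ) :
    ‖FourierTransform.fourier (A.indicator fun _ => (1 : ℂ)) ξ -
        FourierTransform.fourier (B.indicator fun _ => (1 : ℂ)) ξ‖ ≤ volume.real (A \ B) := by
  have hint : IntegrableOn (fun x : ℝ => (fourierChar (-(x * ξ)) : ℂ)) A :=
    Measure.integrableOn_of_bounded hA_fin (by fun_prop : Continuous _).aestronglyMeasurable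
      (M := 1) (.of_forall fun x => by rw [Circle.norm_coe])
  rw [fourier_indicator_eq_setIntegral hA, fourier_indicator_eq_setIntegral hB,
    ← setIntegral_sdiff hB hint hBA]
  simpa using norm_setIntegral_le_of_norm_le_const
    ((measure_mono Set.sdiff_subset).trans_lt hA_fin.lt_top)
    fun x _ => (Circle.norm_coe (fourierChar (-(x * ξ)))).le

end Fourier

lemma pow_add_add_le_pow {y : ℝ} (hy : 4 ≤ y) (N m : ℕ) :
    y ^ N + N + 2 * m + 1 ≤ y ^ (N + m + 1) := by
  have bernoulli (k : ℕ) : 1 + 3 * (k : ℝ) ≤ y ^ k := by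
    have := one_add_mul_le_pow (a := y - 1) (by linarith) k
    rw [add_sub_cancel] at this
    nlinarith
  have hN := bernoulli N
  have hm := bernoulli (m + 1)
  push_cast at hm
  rw [Nat.add_assoc, pow_add]
  nlinarith [mul_le_mul_of_nonneg_left hm (pow_nonneg (by linarith : (0 : ℝ) ≤ y) N)]

lemma le_two_rpow_neg_of_rpow_inv_le_half {a r : ℝ} (ha : 0 ≤ a) (hr : 0 < r)
    (h : a ^ r⁻¹ ≤ 1 / 2) : a ≤ 2 ^ (-r) := by
  calc a = (a ^ r⁻¹) ^ r := (rpow_inv_rpow ha hr.ne').symm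
    _ ≤ (1 / 2) ^ r := by gcongr
    _ = 2 ^ (-r) := by rw [one_div, inv_rpow zero_le_two, rpow_neg zero_le_two]

lemma exists_le_pow_le_pow_mul_max {y : ℝ} (hy : 1 < y) (T : ℝ) (n₀ : ℕ) :
    ∃ N ≥ n₀, T ≤ y ^ N ∧ y ^ N ≤ y ^ (n₀ + 1) * max T 1 := by
  obtain ⟨M, hMle, hltM⟩ := exists_nat_pow_near (le_max_right T 1) hy
  have hy0 : 0 ≤ y := by linarith
  refine ⟨n₀ + (M + 1), by omega, ?_, ?_⟩
  · calc T ≤ max T 1 := le_max_left T 1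
      _ ≤ y ^ (M + 1) := hltM.le
      _ ≤ y ^ (n₀ + (M + 1)) := pow_le_pow_right₀ hy.le (by omega)
  · rw [show n₀ + (M + 1) = (n₀ + 1) + M by omega, pow_add]
    gcongr

lemma four_le_four_rpow_inv {δ : ℝ} (hδ0 : 0 < δ) (hδ1 : δ ≤ 1) : (4 : ℝ) ≤ 4 ^ δ⁻¹ := by
  simpa using rpow_le_rpow_of_exponent_le (by norm_num : (1 : ℝ) ≤ 4)
    (one_le_inv₀ hδ0 |>.2 hδ1)

lemma exists_stage_of_log {δ : ℝ} (hδ0 : 0 < δ) (hδ1 : δ ≤ 1) {t : ℝ} (ht : 0 ≤ t) (n₀ : ℕ) :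
    ∃ N ≥ n₀, 2 * t ≤ ((4 : ℝ) ^ δ⁻¹) ^ N ∧ (4 : ℝ) ^ N ≤ 4 ^ (n₀ + 1) * (1 + 2 * t ^ δ) := by
  have hpow (k : ℕ) : (((4 : ℝ) ^ δ⁻¹) ^ k) ^ δ = 4 ^ k := by
    rw [← rpow_pow_comm (by positivity), rpow_inv_rpow (by norm_num) hδ0.ne']
  obtain ⟨N, hN, hTy, hyT⟩ :=
    exists_le_pow_le_pow_mul_max (y := 4 ^ δ⁻¹) (by linarith [four_le_four_rpow_inv hδ0 hδ1])
      (2 * t) n₀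
  refine ⟨N, hN, hTy, ?_⟩
  have hmax : max (2 * t) 1 ^ δ ≤ 1 + 2 * t ^ δ := by
    have h2 : (2 : ℝ) ^ δ ≤ 2 := by
      simpa using rpow_le_rpow_of_exponent_le one_le_two hδ1
    rcases le_total (2 * t) 1 with h | h
    · rw [max_eq_right h, one_rpow]
      have := rpow_nonneg ht δ
      linarith
    · rw [max_eq_left h, mul_rpow zero_le_two ht]
      nlinarith [rpow_nonneg ht δ]
  calc (4 : ℝ) ^ N = (((4 : ℝ) ^ δ⁻¹) ^ N) ^ δ := (hpow N).symm
    _ ≤ (((4 : ℝ) ^ δ⁻¹) ^ (n₀ + 1) * max (2 * t) 1) ^ δ := by gcongr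
    _ = 4 ^ (n₀ + 1) * max (2 * t) 1 ^ δ := by
        rw [mul_rpow (by positivity) (by positivity), hpow]
    _ ≤ 4 ^ (n₀ + 1) * (1 + 2 * t ^ δ) := by gcongr

lemma two_rpow_neg_two_mul_log_le {x : ℝ} (hx : 0 < x) :
    (2 : ℝ) ^ (-(2 * log (1 + x))) ≤ 1 / x := by
  have hlog : 0 ≤ log (1 + x) := log_nonneg (by linarith)
  calc (2 : ℝ) ^ (-(2 * log (1 + x)))
      = exp (log 2 * -(2 * log (1 + x))) := rpow_def_of_pos two_pos _
    _ ≤ exp (-log (1 + x)) := by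
        gcongr
        nlinarith [log_two_gt_d9]
    _ = 1 / (1 + x) := by rw [exp_neg, exp_log (by linarith), one_div]
    _ ≤ 1 / x := by gcongr; linarith

section GeneralizedCantor

def stageInterval (α : ℕ → ℝ) (n : ℕ) (b : Fin n → Bool) : Set ℝ :=
  Set.Icc (leftPt α n b) (leftPt α n b + stageLen α n)

lemma cantorStage_zero (α : ℕ → ℝ) : cantorStage α 0 = Set.Icc 0 1 := by
  simp [cantorStage, leftPt, stageLen, Set.iUnion_const]

lemma measurableSet_cantorStage (α : ℕ → ℝ) (n : ℕ) : MeasurableSet (cantorStage α n) :=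
  .iUnion fun _ => measurableSet_Icc

lemma measurableSet_gCantorSet (α : ℕ → ℝ) : MeasurableSet (gCantorSet α) :=
  .iInter fun n => measurableSet_cantorStage α n

lemma gCantorSet_subset_cantorStage (α : ℕ → ℝ) (n : ℕ) : gCantorSet α ⊆ cantorStage α n :=
  Set.iInter_subset _ n

variable {α : ℕ → ℝ}

lemma leftPt_succ (n : ℕ) (b : Fin (n + 1) → Bool) :
    leftPt α (n + 1) b =
      leftPt α n (Fin.init b) + if b (Fin.last n) then stageLen α n - stageLen α (n + 1) else 0 :=
  rfl

lemma leftPt_snoc (n : ℕ) (b : Fin n → Bool) (c : Bool) :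
    leftPt α (n + 1) (Fin.snoc b c) =
      leftPt α n b + if c then stageLen α n - stageLen α (n + 1) else 0 := by
  simp [leftPt_succ]

lemma cantorStage_diff_succ_subset (n : ℕ) :
    cantorStage α n \ cantorStage α (n + 1) ⊆
      ⋃ b : Fin n → Bool, Set.Ioo (leftPt α n b + stageLen α (n + 1))
        (leftPt α n b + stageLen α n - stageLen α (n + 1)) := by
  rintro x ⟨hx, hx'⟩
  obtain ⟨b, h₁, h₂⟩ := Set.mem_iUnion.1 hx
  have child (c : Bool) : x ∉ stageInterval α (n + 1) (Fin.snoc b c) :=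
    fun h => hx' (Set.mem_iUnion.2 ⟨_, h⟩)
  have hleft := child false
  have hright := child true
  simp only [stageInterval, leftPt_snoc, Set.mem_Icc, not_and_or, not_le, Bool.false_eq_true,
    if_true, if_false, add_zero] at hleft hright
  refine Set.mem_iUnion.2 ⟨b, hleft.resolve_left (not_lt.2 h₁), ?_⟩
  rcases hright with h | h <;> linarith

lemma volume_cantorStage_diff_succ_le (n : ℕ) :
    volume (cantorStage α n \ cantorStage α (n + 1)) ≤
      ENNReal.ofReal (2 ^ n * removedLen α n) := by
  refine (measure_mono (cantorStage_diff_succ_subset n)).trans <| (measure_iUnion_le _).trans ?_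
  have hlen (b : Fin n → Bool) : leftPt α n b + stageLen α n - stageLen α (n + 1) -
      (leftPt α n b + stageLen α (n + 1)) = removedLen α n := by
    rw [removedLen, stageLen]; ring
  simp only [volume_Ioo, hlen, tsum_fintype, Finset.sum_const, Finset.card_univ,
    Fintype.card_fun, Fintype.card_bool, Fintype.card_fin, nsmul_eq_mul]
  rw [ENNReal.ofReal_mul (by positivity), ENNReal.ofReal_pow zero_le_two]
  simp

variable (hα : ∀ n, α n ∈ Set.Ioo (0 : ℝ) 1)
include hα

lemma stageLen_pos (n : ℕ) : 0 < stageLen α n := by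
  induction n with
  | zero => simp [stageLen]
  | succ n ih =>
    have := (hα n).2
    rw [stageLen]
    nlinarith

lemma two_mul_stageLen_succ_lt (n : ℕ) : 2 * stageLen α (n + 1) < stageLen α n := by
  have := (hα n).1
  have := stageLen_pos hα n
  rw [stageLen]
  nlinarith

lemma stageInterval_succ_subset (n : ℕ) (b : Fin (n + 1) → Bool) :
    stageInterval α (n + 1) b ⊆ stageInterval α n (Fin.init b) := by
  have := two_mul_stageLen_succ_lt hα n
  have := stageLen_pos hα (n + 1)
  rintro x ⟨h₁, h₂⟩
  simp only [leftPt_succ] at h₁ h₂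
  constructor <;> split_ifs at h₁ h₂ <;> linarith

lemma pairwise_disjoint_stageInterval (n : ℕ) :
    Pairwise (Function.onFun Disjoint (stageInterval α n)) := by
  induction n with
  | zero => exact fun b b' hne => absurd (Subsingleton.elim b b') hne
  | succ n ih =>
    intro b b' hne
    by_cases hinit : Fin.init b = Fin.init b'
    · -- two children of the same parent are separated by the removed middle interval
      have hlast : b (Fin.last n) ≠ b' (Fin.last n) := fun h =>
        hne (by rw [← Fin.snoc_init_self b, ← Fin.snoc_init_self b', hinit, h])
      have := two_mul_stageLen_succ_lt hα n
      rw [Function.onFun, Set.disjoint_left]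
      rintro x ⟨h₁, h₂⟩ ⟨h₁', h₂'⟩
      simp only [leftPt_succ, hinit] at h₁ h₂ h₁' h₂'
      cases hb : b (Fin.last n) <;> cases hb' : b' (Fin.last n) <;>
        simp only [hb, hb', ne_eq, not_true_eq_false] at hlast h₁ h₂ h₁' h₂' <;>
        simp only [Bool.false_eq_true, if_true, if_false] at h₁ h₂ h₁' h₂' <;> linarith
    · exact (ih hinit).mono (stageInterval_succ_subset hα n b) (stageInterval_succ_subset hα n b')

lemma antitone_cantorStage : Antitone (cantorStage α) :=
  antitone_nat_of_succ_le fun n => Set.iUnion_subset fun b =>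
    (stageInterval_succ_subset hα n b).trans (Set.subset_iUnion (stageInterval α n) _)

lemma cantorStage_diff_gCantorSet_subset (N : ℕ) :
    cantorStage α N \ gCantorSet α ⊆
      ⋃ m, cantorStage α (N + m) \ cantorStage α (N + m + 1) := by
  rintro x ⟨hx, hx'⟩
  simp only [gCantorSet, Set.mem_iInter, not_forall] at hx'
  obtain ⟨n, hn⟩ := hx'
  by_contra hmem
  simp only [Set.mem_iUnion, Set.mem_sdiff, not_exists, not_and, not_not] at hmem
  have hall (m : ℕ) : x ∈ cantorStage α (N + m) := by
    induction m with
    | zero => exact hx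
    | succ m ih => exact hmem m ih
  exact hn (antitone_cantorStage hα (by omega : n ≤ N + n) (hall n))

lemma norm_fourier_indicator_cantorStage_le (N : ℕ) {ξ : ℝ} (hξ : ξ ≠ 0) :
    ‖FourierTransform.fourier ((cantorStage α N).indicator fun _ => (1 : ℂ)) ξ‖ ≤
      2 ^ N / (π * |ξ|) := by
  unfold cantorStage
  simpa using norm_fourier_indicator_iUnion_Icc_le (pairwise_disjoint_stageInterval hα N) hξ

lemma norm_fourier_indicator_gCantorSet_le (N : ℕ) {ξ : ℝ} (hξ : ξ ≠ 0) :
    ‖FourierTransform.fourier ((gCantorSet α).indicator fun _ => (1 : ℂ)) ξ‖ ≤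
      2 ^ N / (π * |ξ|) + volume.real (cantorStage α N \ gCantorSet α) := by
  have hfin : volume (cantorStage α N) ≠ ⊤ := by
    refine ne_top_of_le_ne_top ?_ (measure_mono (antitone_cantorStage hα (Nat.zero_le N)))
    simp [cantorStage_zero]
  refine (norm_le_norm_add_norm_sub' _ (FourierTransform.fourier
    ((cantorStage α N).indicator fun _ => (1 : ℂ)) ξ)).trans ?_
  rw [norm_sub_rev]
  exact add_le_add (norm_fourier_indicator_cantorStage_le hα N hξ)
    (norm_fourier_indicator_sub_le (measurableSet_cantorStage α N) (measurableSet_gCantorSet α)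
      (gCantorSet_subset_cantorStage α N) hfin ξ)

lemma volume_cantorStage_diff_gCantorSet_le {y : ℝ} (hy : 4 ≤ y) {N : ℕ}
    (hsmall : ∀ n, N ≤ n → removedLen α n ≤ 2 ^ (-y ^ (n + 1))) :
    volume (cantorStage α N \ gCantorSet α) ≤ ENNReal.ofReal (2 ^ (-y ^ N)) := by
  have hterm (m : ℕ) : 2 ^ (N + m) * removedLen α (N + m) ≤ 2 ^ (-y ^ N) / 2 / 2 ^ m := by
    have h2 : (0 : ℝ) < 2 := two_pos
    calc 2 ^ (N + m) * removedLen α (N + m)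
        ≤ 2 ^ (N + m) * 2 ^ (-y ^ (N + m + 1)) := by gcongr; exact hsmall _ (by omega)
      _ = 2 ^ ((N + m : ℕ) + -y ^ (N + m + 1)) := by rw [rpow_add h2, rpow_natCast]
      _ ≤ 2 ^ (-y ^ N + -1 + -(m : ℝ)) := by
          have := pow_add_add_le_pow hy N m
          exact rpow_le_rpow_of_exponent_le one_le_two (by push_cast; linarith)
      _ = 2 ^ (-y ^ N) / 2 / 2 ^ m := by
          rw [rpow_add h2, rpow_add h2, rpow_neg h2.le (m : ℝ), rpow_neg_one,
            rpow_natCast]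
          field_simp
  calc volume (cantorStage α N \ gCantorSet α)
      ≤ ∑' m, volume (cantorStage α (N + m) \ cantorStage α (N + m + 1)) :=
        (measure_mono (cantorStage_diff_gCantorSet_subset hα N)).trans (measure_iUnion_le _)
    _ ≤ ∑' m : ℕ, ENNReal.ofReal (2 ^ (-y ^ N) / 2 / 2 ^ m) :=
        ENNReal.tsum_le_tsum fun m =>
          (volume_cantorStage_diff_succ_le _).trans (ENNReal.ofReal_le_ofReal (hterm m))
    _ = ENNReal.ofReal (2 ^ (-y ^ N)) := by
        rw [← ENNReal.ofReal_tsum_of_nonneg (fun m => by positivity)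
          (summable_geometric_two' _), tsum_geometric_two']

lemma eventually_removedLen_le {δ : ℝ}
    (hsum : Summable fun n : ℕ => removedLen α n ^ ((4 : ℝ) ^ (-((n : ℝ) + 1) / δ))) :
    ∀ᶠ n in Filter.atTop, removedLen α n ≤ 2 ^ (-((4 : ℝ) ^ δ⁻¹) ^ (n + 1)) := by
  filter_upwards [hsum.tendsto_atTop_zero.eventually_le_const (by norm_num : (0 : ℝ) < 1 / 2)]
    with n hn
  have hexp : (4 : ℝ) ^ (-((n : ℝ) + 1) / δ) = (((4 : ℝ) ^ δ⁻¹) ^ (n + 1))⁻¹ := by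
    rw [← rpow_natCast, ← rpow_mul (by norm_num), ← rpow_neg (by norm_num)]
    push_cast
    ring_nf
  rw [hexp] at hn
  exact le_two_rpow_neg_of_rpow_inv_le_half
    (mul_pos (stageLen_pos hα n) (hα n).1).le (by positivity) hn

lemma sq_norm_fourier_indicator_gCantorSet_le {y : ℝ} (hy : 4 ≤ y) {N : ℕ}
    (hsmall : ∀ n, N ≤ n → removedLen α n ≤ 2 ^ (-y ^ (n + 1)))
    {ξ : ℝ} (hξ : ξ ≠ 0) (hN : 2 * log (1 + |ξ|) ≤ y ^ N) :
    ‖FourierTransform.fourier ((gCantorSet α).indicator fun _ => (1 : ℂ)) ξ‖ ^ 2 ≤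
      4 * 4 ^ N / |ξ| ^ 2 := by
  have hξ0 : 0 < |ξ| := abs_pos.2 hξ
  have htail : volume.real (cantorStage α N \ gCantorSet α) ≤ 1 / |ξ| :=
    calc volume.real (cantorStage α N \ gCantorSet α)
        ≤ 2 ^ (-y ^ N) :=
          ENNReal.toReal_le_of_le_ofReal (by positivity)
            (volume_cantorStage_diff_gCantorSet_le hα hy hsmall)
      _ ≤ 2 ^ (-(2 * log (1 + |ξ|))) :=
          rpow_le_rpow_of_exponent_le one_le_two (by linarith)
      _ ≤ 1 / |ξ| := two_rpow_neg_two_mul_log_le hξ0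
  have hF : ‖FourierTransform.fourier ((gCantorSet α).indicator fun _ => (1 : ℂ)) ξ‖ ≤
      2 * 2 ^ N / |ξ| :=
    calc _ ≤ 2 ^ N / (π * |ξ|) + volume.real (cantorStage α N \ gCantorSet α) :=
          norm_fourier_indicator_gCantorSet_le hα N hξ
      _ ≤ 2 ^ N / (1 * |ξ|) + 1 / |ξ| := by
          gcongr
          linarith [pi_gt_three]
      _ ≤ 2 * 2 ^ N / |ξ| := by
          rw [one_mul, ← add_div, two_mul]
          gcongr
          exact one_le_pow₀ one_le_two
  calc _ ≤ (2 * 2 ^ N / |ξ|) ^ 2 := by gcongr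
    _ = 4 * 4 ^ N / |ξ| ^ 2 := by rw [div_pow, mul_pow, ← pow_mul, mul_comm N, pow_mul]; norm_num

end GeneralizedCantor

/-- If the removed lengths `l_n` of a generalized Cantor set `C`
satisfy `∑ₙ l_n^(1/4^(n/δ)) < ∞` for some `δ ∈ (0,1)`, then there is `λ > 0` with
`|𝓕(χ_C)(ξ)|² ≤ λ (1 + log^δ(1+|ξ|)) / |ξ|²` for all `ξ ≠ 0`.
(Here `removedLen α n` is the paper's `l_{n+1}`.) -/
theorem stmt0 (α : ℕ → ℝ) (hα : ∀ n, α n ∈ Set.Ioo (0 : ℝ) 1) (δ : ℝ)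
    (hδ : δ ∈ Set.Ioo (0 : ℝ) 1)
    (hsum : Summable fun n : ℕ => removedLen α n ^ ((4 : ℝ) ^ (-((n : ℝ) + 1) / δ))) :
    ∃ lam > (0 : ℝ), ∀ ξ : ℝ, ξ ≠ 0 →
      ‖FourierTransform.fourier ((gCantorSet α).indicator fun _ => (1 : ℂ)) ξ‖ ^ 2 ≤
        lam * (1 + Real.log (1 + |ξ|) ^ δ) / |ξ| ^ 2 := by
  obtain ⟨hδ0, hδ1⟩ := hδ
  obtain ⟨n₀, hsmall⟩ := Filter.eventually_atTop.1 (eventually_removedLen_le hα hsum)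
  refine ⟨8 * 4 ^ (n₀ + 1), by positivity, fun ξ hξ => ?_⟩
  set t := log (1 + |ξ|)
  have ht : 0 ≤ t := log_nonneg (by linarith [abs_nonneg ξ])
  obtain ⟨N, hN, hyN, h4N⟩ := exists_stage_of_log hδ0 hδ1.le ht n₀
  calc _ ≤ 4 * 4 ^ N / |ξ| ^ 2 :=
        sq_norm_fourier_indicator_gCantorSet_le hα (four_le_four_rpow_inv hδ0 hδ1.le)
          (fun n hn => hsmall n (hN.trans hn)) hξ hyN
    _ ≤ 4 * (4 ^ (n₀ + 1) * (1 + 2 * t ^ δ)) / |ξ| ^ 2 := by gcongr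
    _ ≤ 8 * 4 ^ (n₀ + 1) * (1 + t ^ δ) / |ξ| ^ 2 := by
        gcongr ?_ / _
        nlinarith [rpow_nonneg ht δ, pow_pos (by norm_num : (0 : ℝ) < 4) (n₀ + 1)]
end

section
/- For any θ ∈ [0,1) and any δ ∈ (0,1), there exists a sequence of ratios α = {α_n}_{n≥1} ⊂ (0,1) such that the associated generalized Cantor set C satisfies m(C) = θ (where m is Lebesgue measure) and the stage-n removed-interval lengths l_n satisfy ∑_{n=1}^∞ l_n^{1/4^{n/δ}} < ∞. -/
open MeasureTheory

section Aux

variable {α : ℕ → ℝ}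

lemma sl_pos (hα : ∀ n, α n ∈ Set.Ioo (0:ℝ) 1) : ∀ n, 0 < stageLen α n
  | 0 => one_pos
  | n + 1 => by
      have h := hα n
      have hp := sl_pos hα n
      obtain ⟨h1, h2⟩ := h
      show 0 < stageLen α n * (1 - α n) / 2
      have : 0 < stageLen α n * (1 - α n) := mul_pos hp (by linarith)
      linarith

lemma sl_two (hα : ∀ n, α n ∈ Set.Ioo (0:ℝ) 1) (n : ℕ) :
    2 * stageLen α (n+1) < stageLen α n := by
  obtain ⟨h1, h2⟩ := hα n
  have hp := sl_pos hα n
  show 2 * (stageLen α n * (1 - α n) / 2) < stageLen α n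
  nlinarith

lemma leftPt_nested (hα : ∀ n, α n ∈ Set.Ioo (0:ℝ) 1) (n : ℕ) (b : Fin (n+1) → Bool) :
    leftPt α n (fun i => b i.castSucc) ≤ leftPt α (n+1) b ∧
      leftPt α (n+1) b + stageLen α (n+1) ≤
        leftPt α n (fun i => b i.castSucc) + stageLen α n := by
  have h2 := sl_two hα n
  have hp := sl_pos hα (n+1)
  show leftPt α n _ ≤ leftPt α n _ + _ ∧ leftPt α n _ + _ + _ ≤ _
  cases hb : b (Fin.last n) <;> simp [hb] <;>
    first
      | linarith
      | exact ⟨by linarith, by linarith⟩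

lemma stage_anti (hα : ∀ n, α n ∈ Set.Ioo (0:ℝ) 1) : Antitone (cantorStage α) := by
  refine antitone_nat_of_succ_le fun n => Set.iUnion_subset fun b => ?_
  obtain ⟨h1, h2⟩ := leftPt_nested hα n b
  exact Set.subset_iUnion_of_subset (fun i => b i.castSucc) (Set.Icc_subset_Icc h1 h2)

lemma stage_disj (hα : ∀ n, α n ∈ Set.Ioo (0:ℝ) 1) : ∀ n,
    Pairwise (Function.onFun Disjoint fun b : Fin n → Bool =>
      Set.Icc (leftPt α n b) (leftPt α n b + stageLen α n))
  | 0 => fun b c hbc => absurd (Subsingleton.elim b c) hbc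
  | n + 1 => by
    intro b c hbc
    by_cases h : (fun i => b i.castSucc) = (fun i : Fin n => c i.castSucc)
    · have hlast : b (Fin.last n) ≠ c (Fin.last n) := by
        intro he
        apply hbc
        funext i
        induction i using Fin.lastCases with
        | last => exact he
        | cast i => exact congrFun h i
      have h2 := sl_two hα n
      have hp := sl_pos hα (n+1)
      have key : ∀ u v : Fin (n+1) → Bool, u (Fin.last n) = false → v (Fin.last n) = true →
          (fun i => u i.castSucc) = (fun i : Fin n => v i.castSucc) →
          Disjoint (Set.Icc (leftPt α (n+1) u) (leftPt α (n+1) u + stageLen α (n+1)))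
            (Set.Icc (leftPt α (n+1) v) (leftPt α (n+1) v + stageLen α (n+1))) := by
        intro u v hu hv huv
        rw [Set.disjoint_left]
        intro x hx hx'
        have e1 : leftPt α (n+1) u = leftPt α n (fun i => u i.castSucc) := by
          show leftPt α n _ + _ = _
          rw [hu]; simp
        have e2 : leftPt α (n+1) v =
            leftPt α n (fun i => u i.castSucc) + (stageLen α n - stageLen α (n+1)) := by
          show leftPt α n _ + _ = _
          rw [hv, ← huv]; simp
        obtain ⟨ha1, ha2⟩ := hx
        obtain ⟨hb1, hb2⟩ := hx'
        rw [e1] at ha2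
        rw [e2] at hb1
        linarith
      cases hb : b (Fin.last n) <;> cases hc : c (Fin.last n)
      · exact absurd (hc ▸ hb) hlast
      · exact key b c hb hc h
      · exact (key c b hc hb h.symm).symm
      · exact absurd (hc ▸ hb) hlast
    · have hd := stage_disj hα n h
      have h1 := leftPt_nested hα n b
      have h2 := leftPt_nested hα n c
      exact hd.mono (Set.Icc_subset_Icc h1.1 h1.2) (Set.Icc_subset_Icc h2.1 h2.2)

lemma stage_vol (hα : ∀ n, α n ∈ Set.Ioo (0:ℝ) 1) (n : ℕ) :
    volume (cantorStage α n) = ENNReal.ofReal (2 ^ n * stageLen α n) := by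
  rw [cantorStage, measure_iUnion (stage_disj hα n) fun b => measurableSet_Icc]
  have hv : ∀ b : Fin n → Bool,
      volume (Set.Icc (leftPt α n b) (leftPt α n b + stageLen α n)) =
        ENNReal.ofReal (stageLen α n) := by
    intro b; rw [Real.volume_Icc]; ring_nf
  simp_rw [hv]
  rw [tsum_fintype, Finset.sum_const, Finset.card_univ]
  have : Fintype.card (Fin n → Bool) = 2 ^ n := by simp
  rw [this, nsmul_eq_mul, ENNReal.ofReal_mul (by positivity)]
  congr 1
  rw [ENNReal.ofReal_pow (by norm_num)]
  norm_num

end Aux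

/-- For any `θ ∈ [0,1)` and `δ ∈ (0,1)` there is a sequence of
ratios `α ⊂ (0,1)` whose generalized Cantor set `C` has Lebesgue measure `θ` and
whose removed lengths satisfy `∑ₙ l_n^(1/4^(n/δ)) < ∞`.
(Here `removedLen α n` is the paper's `l_{n+1}`.) -/
theorem stmt3 (θ : ℝ) (hθ : θ ∈ Set.Ico (0 : ℝ) 1) (δ : ℝ) (hδ : δ ∈ Set.Ioo (0 : ℝ) 1) :
    ∃ α : ℕ → ℝ, (∀ n, α n ∈ Set.Ioo (0 : ℝ) 1) ∧
      MeasureTheory.volume (gCantorSet α) = ENNReal.ofReal θ ∧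
      Summable fun n : ℕ => removedLen α n ^ ((4 : ℝ) ^ (-((n : ℝ) + 1) / δ)) := by
  obtain ⟨hθ0, hθ1⟩ := hθ
  obtain ⟨hδ0, hδ1⟩ := hδ
  -- the auxiliary sequences
  set K : ℕ → ℝ := fun m => (4 : ℝ) ^ (((m : ℝ) + 1) / δ) with hKdef
  set g : ℕ → ℝ := fun m => Real.exp (-((m : ℝ) * K m)) with hgdef
  set h : ℕ → ℝ := fun n => (1/2) * 2 ^ (n+1) * g (n+1) with hhdef
  have hKpos : ∀ m, 0 < K m := fun m => Real.rpow_pos_of_pos (by norm_num) _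
  have hK4 : ∀ m : ℕ, (4 : ℝ) ≤ K m := by
    intro m
    have h1 : (1 : ℝ) ≤ ((m : ℝ) + 1) / δ := by
      rw [le_div_iff₀ hδ0]
      have : (0:ℝ) ≤ (m:ℝ) := Nat.cast_nonneg m
      linarith
    calc (4:ℝ) = (4:ℝ) ^ (1:ℝ) := by rw [Real.rpow_one]
      _ ≤ K m := Real.rpow_le_rpow_of_exponent_le (by norm_num) h1
  have hgpos : ∀ m, 0 < g m := fun m => Real.exp_pos _
  have hgb : ∀ m : ℕ, 1 ≤ m → g m ≤ (1/5 : ℝ) ^ m := by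
    intro m hm
    have hm1 : (1 : ℝ) ≤ (m : ℝ) := by exact_mod_cast hm
    have h1 : ((m:ℝ)) * 4 ≤ (m:ℝ) * K m := by
      have := hK4 m; nlinarith
    have h2 : g m ≤ Real.exp (-((m:ℝ) * 4)) := by
      rw [hgdef]; exact Real.exp_le_exp.mpr (by linarith)
    have h3 : Real.exp (-((m:ℝ) * 4)) = Real.exp (-4 : ℝ) ^ m := by
      rw [← Real.exp_nat_mul]; ring_nf
    have h4 : Real.exp (-4 : ℝ) ≤ 1/5 := by
      rw [Real.exp_neg]
      have h5 : (5:ℝ) ≤ Real.exp 4 := by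
        have := Real.add_one_le_exp (4:ℝ); linarith
      have := inv_anti₀ (by norm_num : (0:ℝ) < 5) h5
      linarith
    calc g m ≤ Real.exp (-4:ℝ) ^ m := h3 ▸ h2
      _ ≤ (1/5:ℝ) ^ m := pow_le_pow_left₀ (Real.exp_pos _).le h4 m
  have hhpos : ∀ n, 0 < h n := by
    intro n
    exact mul_pos (mul_pos (by norm_num) (by positivity)) (hgpos _)
  have hhb : ∀ n : ℕ, h n ≤ (1/2) * (2/5 : ℝ) ^ (n+1) := by
    intro n
    have := hgb (n+1) (by omega)
    have h2 : (2:ℝ) ^ (n+1) * g (n+1) ≤ 2 ^ (n+1) * (1/5:ℝ) ^ (n+1) := by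
      apply mul_le_mul_of_nonneg_left this (by positivity)
    have h3 : (2:ℝ) ^ (n+1) * (1/5:ℝ) ^ (n+1) = (2/5:ℝ) ^ (n+1) := by
      rw [← mul_pow]; norm_num
    rw [hhdef]
    calc (1/2:ℝ) * 2 ^ (n+1) * g (n+1) = (1/2) * (2 ^ (n+1) * g (n+1)) := by ring
      _ ≤ (1/2) * (2/5:ℝ) ^ (n+1) := by nlinarith
  have hgeo : Summable (fun n : ℕ => (1/2 : ℝ) * (2/5) ^ (n+1)) := by
    apply Summable.mul_left
    exact ((summable_nat_add_iff 1).mpr (summable_geometric_of_lt_one (by norm_num) (by norm_num)))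
  have hhsum : Summable h :=
    Summable.of_nonneg_of_le (fun n => (hhpos n).le) hhb hgeo
  have hT : ∑' n, h n ≤ 1/3 := by
    have h1 : ∑' n, h n ≤ ∑' n : ℕ, (1/2 : ℝ) * (2/5) ^ (n+1) :=
      Summable.tsum_le_tsum hhb hhsum hgeo
    have h2 : ∑' n : ℕ, (1/2 : ℝ) * (2/5) ^ (n+1) = (1/2) * ∑' n : ℕ, ((2/5:ℝ)) ^ (n+1) :=
      tsum_mul_left
    have h3 : ∑' n : ℕ, ((2/5:ℝ)) ^ (n+1) = (2/5) * ∑' n : ℕ, ((2/5:ℝ)) ^ n := by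
      rw [← tsum_mul_left]
      exact tsum_congr fun n => by rw [pow_succ]; ring
    rw [h2, h3, tsum_geometric_of_lt_one (by norm_num) (by norm_num)] at h1
    norm_num at h1 ⊢
    linarith
  -- tail sums
  have hsm : ∀ m : ℕ, Summable fun k => h (k + m) := fun m => (summable_nat_add_iff m).mpr hhsum
  set ε : ℕ → ℝ := fun n => match n with
    | 0 => 1
    | m + 1 => ∑' k, h (k + m)
    with hεdef
  have hε0 : ε 0 = 1 := rfl
  have hstep : ∀ m : ℕ, ε (m+1) = h m + ε (m+2) := by
    intro m
    show ∑' k, h (k + m) = h m + ∑' k, h (k + (m+1))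
    rw [Summable.tsum_eq_zero_add (hsm m)]
    congr 1
    · simp
    · exact tsum_congr fun k => by ring_nf
  have hεpos : ∀ n, 0 < ε n := by
    intro n
    match n with
    | 0 => norm_num [hε0]
    | m + 1 =>
      exact Summable.tsum_pos (hsm m) (fun k => (hhpos _).le) 0 (hhpos _)
  have hε1 : ε 1 ≤ 1/3 := by
    show ∑' k, h (k + 0) ≤ 1/3
    calc ∑' k, h (k + 0) = ∑' k, h k := tsum_congr fun k => by rw [add_zero]
      _ ≤ 1/3 := hT
  have hεdec : ∀ n, ε (n+1) < ε n := by
    intro n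
    match n with
    | 0 => calc ε 1 ≤ 1/3 := hε1
             _ < 1 := by norm_num
             _ = ε 0 := rfl
    | m + 1 =>
      have := hstep m
      have := hhpos m
      linarith
  have hεlim : Filter.Tendsto ε Filter.atTop (nhds 0) := by
    have h1 : Filter.Tendsto (fun i => ∑' k, h (k + i)) Filter.atTop (nhds 0) :=
      tendsto_sum_nat_add h
    have h2 : (fun n : ℕ => ε (n + 1)) = fun i => ∑' k, h (k + i) := rfl
    exact (Filter.tendsto_add_atTop_iff_nat 1).mp (h2 ▸ h1)
  -- the main sequences
  set D : ℕ → ℝ := fun n => θ + (1 - θ) * ε n with hDdef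
  have hDpos : ∀ n, 0 < D n := fun n =>
    add_pos_of_nonneg_of_pos hθ0 (mul_pos (by linarith) (hεpos n))
  have hDdec : ∀ n, D (n+1) < D n := by
    intro n
    have := hεdec n
    have h1θ : (0:ℝ) < 1 - θ := by linarith
    rw [hDdef]
    simp only
    nlinarith
  have hD0 : D 0 = 1 := by rw [hDdef]; simp [hε0]
  have hDlim : Filter.Tendsto D Filter.atTop (nhds θ) := by
    have h1 : Filter.Tendsto (fun n => θ + (1 - θ) * ε n) Filter.atTop (nhds (θ + (1-θ) * 0)) :=
      ((hεlim.const_mul (1-θ)).const_add θ)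
    simpa using h1
  set α : ℕ → ℝ := fun n => 1 - D (n+1) / D n with hαdef
  have hαIoo : ∀ n, α n ∈ Set.Ioo (0:ℝ) 1 := by
    intro n
    have h1 := hDpos n
    have h2 := hDpos (n+1)
    have h3 := hDdec n
    constructor
    · have : D (n+1) / D n < 1 := (div_lt_one h1).mpr h3
      simpa [hαdef] using by linarith
    · have : 0 < D (n+1) / D n := div_pos h2 h1
      simpa [hαdef] using by linarith
  have hsl : ∀ n, stageLen α n = D n / 2 ^ n := by
    intro n
    induction n with
    | zero => simp [stageLen, hD0]
    | succ n ih =>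
      have h1 := (hDpos n).ne'
      show stageLen α n * (1 - α n) / 2 = D (n+1) / 2 ^ (n+1)
      rw [ih, hαdef]
      field_simp
      ring
  have hrl : ∀ n, removedLen α n = (1 - θ) * (ε n - ε (n+1)) / 2 ^ n := by
    intro n
    have h1 := (hDpos n).ne'
    rw [removedLen, hsl n, hαdef]
    have : D n / 2 ^ n * (1 - D (n+1) / D n) = (D n - D (n+1)) / 2 ^ n := by
      field_simp
    rw [this, hDdef]
    simp only
    ring_nf
  refine ⟨α, hαIoo, ?_, ?_⟩
  · -- measure computation
    have hmeas : ∀ n, NullMeasurableSet (cantorStage α n) volume := by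
      intro n
      exact (MeasurableSet.iUnion fun b => measurableSet_Icc).nullMeasurableSet
    have hfin : ∃ n, volume (cantorStage α n) ≠ ⊤ := by
      refine ⟨0, ?_⟩
      rw [stage_vol hαIoo 0]
      exact ENNReal.ofReal_ne_top
    have h1 : Filter.Tendsto (volume ∘ cantorStage α) Filter.atTop
        (nhds (volume (gCantorSet α))) := by
      rw [gCantorSet]
      exact tendsto_measure_iInter_atTop hmeas (stage_anti hαIoo) hfin
    have h2 : (volume ∘ cantorStage α) = fun n => ENNReal.ofReal (D n) := by
      funext n
      show volume (cantorStage α n) = _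
      rw [stage_vol hαIoo n, hsl n]
      congr 1
      field_simp
    have h3 : Filter.Tendsto (fun n => ENNReal.ofReal (D n)) Filter.atTop
        (nhds (ENNReal.ofReal θ)) :=
      (ENNReal.continuous_ofReal.tendsto θ).comp hDlim
    rw [h2] at h1
    exact tendsto_nhds_unique h1 h3
  · -- summability
    rw [← summable_nat_add_iff 1]
    have key : ∀ n : ℕ, removedLen α (n+1) ^ ((4:ℝ) ^ (-(((n+1 : ℕ) : ℝ) + 1) / δ)) ≤
        Real.exp (-((n:ℝ) + 1)) := by
      intro n
      have hr : removedLen α (n+1) = (1 - θ) * (1/2) * g (n+1) := by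
        rw [hrl (n+1)]
        have : ε (n+1) - ε (n+2) = h n := by have := hstep n; linarith
        rw [this, hhdef]
        simp only
        field_simp
      have hbase_pos : 0 < removedLen α (n+1) := by
        rw [hr]
        have : (0:ℝ) < 1 - θ := by linarith
        positivity
      have hbase_le : removedLen α (n+1) ≤ g (n+1) := by
        rw [hr]
        have hg := (hgpos (n+1)).le
        nlinarith [hgpos (n+1)]
      set p : ℝ := (4:ℝ) ^ (-(((n+1 : ℕ) : ℝ) + 1) / δ) with hpdef
      have hppos : 0 < p := Real.rpow_pos_of_pos (by norm_num) _
      have h1 : removedLen α (n+1) ^ p ≤ g (n+1) ^ p :=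
        Real.rpow_le_rpow hbase_pos.le hbase_le hppos.le
      have hKp : K (n+1) * p = 1 := by
        rw [hpdef, hKdef]
        simp only
        rw [← Real.rpow_add (by norm_num : (0:ℝ) < 4)]
        push_cast
        rw [show ((n:ℝ) + 1 + 1) / δ + -((n:ℝ) + 1 + 1) / δ = 0 by ring, Real.rpow_zero]
      have h2 : g (n+1) ^ p = Real.exp (-(((n+1:ℕ):ℝ)) * (K (n+1) * p)) := by
        rw [hgdef]
        simp only
        rw [← Real.exp_mul]
        ring_nf
      rw [hKp] at h2
      have h3 : g (n+1) ^ p = Real.exp (-((n:ℝ) + 1)) := by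
        rw [h2]; push_cast; ring_nf
      exact h3 ▸ h1
    have hsumexp : Summable fun n : ℕ => Real.exp (-((n:ℝ) + 1)) := by
      have h1 : ∀ n : ℕ, Real.exp (-((n:ℝ) + 1)) = Real.exp (-1) ^ (n+1) := by
        intro n
        rw [← Real.exp_nat_mul]
        push_cast
        ring_nf
      simp_rw [h1]
      exact (summable_nat_add_iff 1).mpr
        (summable_geometric_of_lt_one (Real.exp_pos _).le
          (Real.exp_lt_one_iff.mpr (by norm_num)))
    refine Summable.of_nonneg_of_le (fun n => ?_) (fun n => key n) hsumexp
    refine Real.rpow_nonneg ?_ _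
    rw [hrl]
    have h1 := hεdec (n+1)
    have h2 : (0:ℝ) ≤ 1 - θ := by linarith
    exact div_nonneg (mul_nonneg h2 (by linarith)) (by positivity)
end

section
/- Let δ ∈ (0,1) and let {l_n}_{n≥1} be a sequence of positive reals with l_n ≤ 1 for all n and ∑_{n=1}^∞ l_n^{1/4^{n/δ}} < ∞. Then there exists a constant κ > 0 such that for every ξ ∈ ℝ, ∑_{n=1}^∞ 2^{n-1} |sin(π l_n ξ)| ≤ κ·(1 + (log(1+|ξ|))^{δ/2}). -/
/-!
Summability of `l n ^ 4 ^ (-(n + 1) / δ)` forces `l n ≤ 2 ^ (-4 ^ ((n + 1) / δ))` from some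
`n₀` on. With `|sin (π l ξ)| ≤ π l |ξ|`, the term `2 ^ k |sin (π l_k ξ)|` is then at most
`2 ^ (-k)` as soon as `k ≥ n₀` and `4 ^ (k / δ) ≥ T := 2 (1 + log (1 + |ξ|))`, while every
earlier term is at most `2 ^ k`. So the series is bounded by `2 ^ N + 2` with `N = n₀ + m`,
where `2 ^ m` is the power of two just above `T ^ (δ / 2)`, and
`2 ^ N ≲ (1 + log (1 + |ξ|)) ^ (δ / 2)`.
-/

open Real Filter Finset

lemma le_two_rpow_neg_inv_of_rpow_le_half {x c : ℝ} (hx : 0 ≤ x) (hc : 0 < c)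
    (h : x ^ c ≤ 1 / 2) : x ≤ 2 ^ (-c⁻¹) := by
  calc x = (x ^ c) ^ c⁻¹ := by rw [← rpow_mul hx, mul_inv_cancel₀ hc.ne', rpow_one]
    _ ≤ (1 / 2) ^ c⁻¹ := by gcongr
    _ = 2 ^ (-c⁻¹) := by rw [one_div, inv_rpow zero_le_two, rpow_neg zero_le_two]

lemma eventually_le_two_rpow_neg_four_rpow {δ : ℝ} {l : ℕ → ℝ} (hl : ∀ n, 0 ≤ l n)
    (hsum : Summable fun n : ℕ => l n ^ ((4 : ℝ) ^ (-((n : ℝ) + 1) / δ))) :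
    ∀ᶠ n in atTop, l n ≤ 2 ^ (-(4 : ℝ) ^ (((n : ℝ) + 1) / δ)) := by
  filter_upwards [hsum.tendsto_atTop_zero.eventually (ge_mem_nhds one_half_pos)] with n hn
  have hinv : ((4 : ℝ) ^ (-((n : ℝ) + 1) / δ))⁻¹ = 4 ^ (((n : ℝ) + 1) / δ) := by
    rw [neg_div, rpow_neg (by norm_num), inv_inv]
  rw [← hinv]
  exact le_two_rpow_neg_inv_of_rpow_le_half (hl n) (by positivity) hn

lemma two_mul_add_le_four_rpow {δ T : ℝ} (hδ : 0 < δ) (hδ1 : δ ≤ 1) {k : ℕ}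
    (hT : T ≤ (4 : ℝ) ^ ((k : ℝ) / δ)) : 2 * k + T ≤ (4 : ℝ) ^ (((k : ℝ) + 1) / δ) := by
  have hk : (k : ℝ) ≤ (4 : ℝ) ^ ((k : ℝ) / δ) :=
    calc (k : ℝ) ≤ 2 ^ k := mod_cast Nat.lt_two_pow_self.le
      _ ≤ 4 ^ k := by gcongr; norm_num
      _ = (4 : ℝ) ^ (k : ℝ) := (rpow_natCast _ _).symm
      _ ≤ (4 : ℝ) ^ ((k : ℝ) / δ) :=
        rpow_le_rpow_of_exponent_le (by norm_num) (le_div_self (Nat.cast_nonneg k) hδ hδ1)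
  have h4 : (4 : ℝ) ≤ (4 : ℝ) ^ (1 / δ) := by
    simpa only [rpow_one] using rpow_le_rpow_of_exponent_le (by norm_num) (one_le_one_div hδ hδ1)
  have hsplit : (4 : ℝ) ^ (((k : ℝ) + 1) / δ) = 4 ^ ((k : ℝ) / δ) * 4 ^ (1 / δ) := by
    rw [← rpow_add (by norm_num), add_div]
  rw [hsplit]
  nlinarith [rpow_pos_of_pos (by norm_num : (0 : ℝ) < 4) ((k : ℝ) / δ)]

lemma two_pow_mul_abs_sin_le {l ξ A T : ℝ} (k : ℕ) (hl : 0 ≤ l) (hlA : l ≤ 2 ^ (-A))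
    (hξT : π * (1 + |ξ|) ≤ 2 ^ T) (hA : 2 * k + T ≤ A) :
    2 ^ k * |sin (π * l * ξ)| ≤ (1 / 2) ^ k := by
  have hsin : |sin (π * l * ξ)| ≤ l * (π * (1 + |ξ|)) :=
    calc |sin (π * l * ξ)| ≤ |π * l * ξ| := abs_sin_le_abs
      _ = l * (π * |ξ|) := by rw [abs_mul, abs_mul, abs_of_pos pi_pos, abs_of_nonneg hl]; ring
      _ ≤ l * (π * (1 + |ξ|)) := by gcongr; linarith
  calc 2 ^ k * |sin (π * l * ξ)| ≤ (2 : ℝ) ^ (k : ℝ) * (2 ^ (-A) * 2 ^ T) := by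
        rw [rpow_natCast]; gcongr; exact hsin.trans (by gcongr)
    _ = 2 ^ ((k : ℝ) + -A + T) := by rw [rpow_add two_pos, rpow_add two_pos, mul_assoc]
    _ ≤ 2 ^ (-(k : ℝ)) := rpow_le_rpow_of_exponent_le one_le_two (by linarith)
    _ = (1 / 2) ^ k := by rw [rpow_neg zero_le_two, rpow_natCast, one_div, inv_pow]

lemma pi_mul_one_add_abs_le_two_rpow (ξ : ℝ) :
    π * (1 + |ξ|) ≤ 2 ^ (2 * (1 + log (1 + |ξ|))) := by
  have hξ : 0 < 1 + |ξ| := by positivity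
  have hlog4 : 1 ≤ log 4 := by
    rw [le_log_iff_exp_le (by norm_num)]
    linarith [exp_one_lt_d9]
  have hL : 0 ≤ log (1 + |ξ|) := log_nonneg (by linarith [abs_nonneg ξ])
  have h : 1 + |ξ| ≤ 4 ^ log (1 + |ξ|) :=
    calc 1 + |ξ| = exp (log (1 + |ξ|)) := (exp_log hξ).symm
      _ ≤ exp (log 4 * log (1 + |ξ|)) := by gcongr; nlinarith
      _ = 4 ^ log (1 + |ξ|) := (rpow_def_of_pos (by norm_num) _).symm
  calc π * (1 + |ξ|) ≤ 4 * 4 ^ log (1 + |ξ|) := by gcongr; exact pi_le_four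
    _ = 2 ^ (2 * (1 + log (1 + |ξ|))) := by
      rw [rpow_mul zero_le_two, show (2 : ℝ) ^ (2 : ℝ) = 4 by norm_num, rpow_add (by norm_num),
        rpow_one]

lemma two_mul_one_add_rpow_le {L p : ℝ} (hL : 0 ≤ L) (hp : 0 ≤ p) (hp1 : p ≤ 1) :
    (2 * (1 + L)) ^ p ≤ 2 * (1 + L ^ p) := by
  rw [mul_rpow zero_le_two (by positivity)]
  have h2 : (2 : ℝ) ^ p ≤ 2 := by
    simpa only [rpow_one] using rpow_le_rpow_of_exponent_le one_le_two hp1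
  have hsub : (1 + L) ^ p ≤ 1 + L ^ p := by
    simpa only [one_rpow] using rpow_add_le_add_rpow zero_le_one hL hp hp1
  calc 2 ^ p * (1 + L) ^ p ≤ 2 * (1 + L) ^ p := by gcongr
    _ ≤ 2 * (1 + L ^ p) := by gcongr

lemma exists_two_pow_near {x : ℝ} (hx : 1 ≤ x) : ∃ m : ℕ, x ≤ 2 ^ m ∧ (2 : ℝ) ^ m ≤ 2 * x := by
  obtain ⟨n, hle, hlt⟩ := exists_nat_pow_near hx one_lt_two
  exact ⟨n + 1, hlt.le, by rw [pow_succ]; linarith⟩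

lemma le_four_rpow_of_rpow_half_le {δ T : ℝ} (hδ : 0 < δ) (hT : 0 ≤ T) {m : ℕ}
    (h : T ^ (δ / 2) ≤ 2 ^ m) : T ≤ (4 : ℝ) ^ ((m : ℝ) / δ) := by
  calc T = (T ^ (δ / 2)) ^ (2 / δ) := by
        rw [← rpow_mul hT, div_mul_div_comm, mul_comm, div_self (by positivity), rpow_one]
    _ ≤ ((2 : ℝ) ^ (m : ℝ)) ^ (2 / δ) := by rw [rpow_natCast]; gcongr
    _ = (4 : ℝ) ^ ((m : ℝ) / δ) := by
      rw [← rpow_mul zero_le_two, show (4 : ℝ) = 2 ^ (2 : ℝ) by norm_num, ← rpow_mul zero_le_two]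
      ring_nf

lemma summable_and_tsum_le_of_le_two_pow {a : ℕ → ℝ} (N : ℕ) (ha : ∀ n, 0 ≤ a n)
    (hhead : ∀ n, a n ≤ 2 ^ n) (htail : ∀ n, N ≤ n → a n ≤ (1 / 2) ^ n) :
    Summable a ∧ ∑' n, a n ≤ 2 ^ N + 2 := by
  have hshift : ∀ n, a (n + N) ≤ (1 / 2) ^ n := fun n =>
    (htail _ (Nat.le_add_left N n)).trans
      (pow_le_pow_of_le_one (by norm_num) (by norm_num) (by omega))
  have hsumm_shift : Summable fun n => a (n + N) :=
    summable_geometric_two.of_nonneg_of_le (fun n => ha _) hshift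
  have hsumm : Summable a := (summable_nat_add_iff N).mp hsumm_shift
  refine ⟨hsumm, ?_⟩
  have hhead_sum : ∑ i ∈ range N, a i ≤ 2 ^ N :=
    calc ∑ i ∈ range N, a i ≤ ∑ i ∈ range N, (2 : ℝ) ^ i := sum_le_sum fun i _ => hhead i
      _ ≤ 2 ^ N := by rw [geom_sum_eq (by norm_num)]; norm_num
  have htail_sum : ∑' n, a (n + N) ≤ 2 :=
    tsum_geometric_two ▸ hsumm_shift.tsum_le_tsum hshift summable_geometric_two
  rw [← hsumm.sum_add_tsum_nat_add N]
  exact add_le_add hhead_sum htail_sum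

lemma exists_cutoff_two_pow_mul_abs_sin_le {δ : ℝ} (hδ : 0 < δ) (hδ1 : δ ≤ 1) {l : ℕ → ℝ}
    (hl : ∀ n, 0 ≤ l n) {n₀ : ℕ}
    (hdecay : ∀ n, n₀ ≤ n → l n ≤ 2 ^ (-(4 : ℝ) ^ (((n : ℝ) + 1) / δ))) (ξ : ℝ) :
    ∃ N : ℕ, (2 : ℝ) ^ N ≤ 2 ^ n₀ * (4 * (1 + log (1 + |ξ|) ^ (δ / 2))) ∧
      ∀ k, N ≤ k → 2 ^ k * |sin (π * l k * ξ)| ≤ (1 / 2) ^ k := by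
  have hL : 0 ≤ log (1 + |ξ|) := log_nonneg (by linarith [abs_nonneg ξ])
  set T := 2 * (1 + log (1 + |ξ|))
  have hT : 1 ≤ T := by linarith
  obtain ⟨m, hmT, hm⟩ := exists_two_pow_near (one_le_rpow hT (by positivity : 0 ≤ δ / 2))
  refine ⟨n₀ + m, ?_, fun k hk => ?_⟩
  · calc (2 : ℝ) ^ (n₀ + m) ≤ 2 ^ n₀ * (2 * T ^ (δ / 2)) := by rw [pow_add]; gcongr
      _ ≤ 2 ^ n₀ * (4 * (1 + log (1 + |ξ|) ^ (δ / 2))) := by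
        have := two_mul_one_add_rpow_le hL (by positivity : 0 ≤ δ / 2) (by linarith)
        exact mul_le_mul_of_nonneg_left (by linarith) (by positivity)
  · have hTk : T ≤ (4 : ℝ) ^ ((k : ℝ) / δ) :=
      (le_four_rpow_of_rpow_half_le hδ (by linarith) hmT).trans (by gcongr <;> norm_cast; omega)
    exact two_pow_mul_abs_sin_le k (hl k) (hdecay k (by omega))
      (pi_mul_one_add_abs_le_two_rpow ξ) (two_mul_add_le_four_rpow hδ hδ1 hTk)

theorem stmt9_general (δ : ℝ) (hδ : δ ∈ Set.Ioo (0 : ℝ) 1) (l : ℕ → ℝ)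
    (hl : ∀ n, 0 < l n)
    (hsum : Summable fun n : ℕ => l n ^ ((4 : ℝ) ^ (-((n : ℝ) + 1) / δ))) :
    ∃ κ > (0 : ℝ), ∀ ξ : ℝ,
      (Summable fun n : ℕ => (2 : ℝ) ^ n * |Real.sin (Real.pi * l n * ξ)|) ∧
      ∑' n : ℕ, (2 : ℝ) ^ n * |Real.sin (Real.pi * l n * ξ)| ≤
        κ * (1 + Real.log (1 + |ξ|) ^ (δ / 2)) := by
  obtain ⟨hδ0, hδ1⟩ := hδ
  have hl0 : ∀ n, 0 ≤ l n := fun n => (hl n).le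
  obtain ⟨n₀, hdecay⟩ := eventually_atTop.mp (eventually_le_two_rpow_neg_four_rpow hl0 hsum)
  refine ⟨2 ^ (n₀ + 2) + 2, by positivity, fun ξ => ?_⟩
  obtain ⟨N, hN, htail⟩ := exists_cutoff_two_pow_mul_abs_sin_le hδ0 hδ1.le hl0 hdecay ξ
  obtain ⟨hsumm, hle⟩ := summable_and_tsum_le_of_le_two_pow N (fun n => by positivity)
    (fun n => mul_le_of_le_one_right (by positivity) (abs_sin_le_one _)) htail
  refine ⟨hsumm, hle.trans ?_⟩
  have hLp : 0 ≤ log (1 + |ξ|) ^ (δ / 2) :=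
    rpow_nonneg (log_nonneg (by linarith [abs_nonneg ξ])) _
  calc (2 : ℝ) ^ N + 2 ≤ 2 ^ n₀ * (4 * (1 + log (1 + |ξ|) ^ (δ / 2))) + 2 := by gcongr
    _ ≤ (2 ^ (n₀ + 2) + 2) * (1 + log (1 + |ξ|) ^ (δ / 2)) := by rw [pow_add]; nlinarith

/-- If `δ ∈ (0,1)` and `{l_n}_{n≥1} ⊂ (0,1]` satisfies
`∑_{n≥1} l_n^(1/4^(n/δ)) < ∞`, then there is `κ > 0` such that for every `ξ ∈ ℝ`
the sum `∑_{n≥1} 2^{n-1} |sin(π l_n ξ)|` converges and is at most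
`κ (1 + log^{δ/2}(1+|ξ|))`. (Here `l n` stands for the paper's `l_{n+1}`,
so `2^n * ⋯ l n ⋯` is the paper's `2^{n-1}|sin(π l_n ξ)|`.) -/
theorem stmt9 (δ : ℝ) (hδ : δ ∈ Set.Ioo (0 : ℝ) 1) (l : ℕ → ℝ)
    (hl : ∀ n, 0 < l n) (hl1 : ∀ n, l n ≤ 1)
    (hsum : Summable fun n : ℕ => l n ^ ((4 : ℝ) ^ (-((n : ℝ) + 1) / δ))) :
    ∃ κ > (0 : ℝ), ∀ ξ : ℝ,
      (Summable fun n : ℕ => (2 : ℝ) ^ n * |Real.sin (Real.pi * l n * ξ)|) ∧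
      ∑' n : ℕ, (2 : ℝ) ^ n * |Real.sin (Real.pi * l n * ξ)| ≤
        κ * (1 + Real.log (1 + |ξ|) ^ (δ / 2)) :=
  stmt9_general δ hδ l hl hsum
end

section
/- Fix 0 < r < ∞ and 0 < δ < 1, and for R > r define φ^{(r,R)} : ℝ → ℝ by φ^{(r,R)}(x) = 1 for |x| ≤ r, φ^{(r,R)}(x) = 1 - log(1+|x|-r)/log(1+R-r) for r < |x| < R, and φ^{(r,R)}(x) = 0 for |x| ≥ R. Let J_{R,1} denote the integral of [(φ^{(r,R)}(x) - φ^{(r,R)}(y))/(x-y)]² · [1 + (log(1+|x-y|))^δ] over the domain D_1(r,R) = {(x,y) ∈ ℝ² : r < |x| < R and r < |y| < R}. Then there exist constants C > 0 and R_0 > r such that for all R ≥ R_0, J_{R,1} ≤ C/(log R)^{1-δ}; in particular J_{R,1} → 0 as R → ∞. -/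
open MeasureTheory

/-- The cutoff function `φ^{(r,R)}` of the paper: `1` on `[-r,r]`,
`1 - log(1+|x|-r)/log(1+R-r)` for `r < |x| < R`, and `0` for `|x| ≥ R`. -/
noncomputable def phiCut (r R x : ℝ) : ℝ :=
  if |x| ≤ r then 1
  else if |x| < R then 1 - Real.log (1 + |x| - r) / Real.log (1 + R - r)
  else 0

/-- The variance-type integral
`∫∫_D [(φ^{(r,R)}(x)-φ^{(r,R)}(y))/(x-y)]² [1 + log^δ(1+|x-y|)] dx dy`
over a domain `D ⊆ ℝ²` (the integrand vanishes on the diagonal, since `0/0 = 0`). -/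
noncomputable def Jint (r R δ : ℝ) (D : Set (ℝ × ℝ)) : ENNReal :=
  ∫⁻ p in D, ENNReal.ofReal
    (((phiCut r R p.1 - phiCut r R p.2) / (p.1 - p.2)) ^ 2 *
      (1 + Real.log (1 + |p.1 - p.2|) ^ δ))

/-!
On `D₁` the cutoff equals `1 - log a / L` with `a = 1 + |x| - r` and `L = log (1 + R - r)`, so the
squared difference quotient is `((log a - log b) / (x - y))² / L²` with `|a - b| ≤ |x - y|`,
while the weight is at most `W = 1 + log (1 + 2R) ^ δ`. The logarithmic mean of `√a, √b`
dominates their geometric mean, which bounds `((log a - log b) / (a - b))²` by the kernel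
`4 / (√a √b (√a + √b)²)`; its integral in `b` over `(0, ∞)` is `8 / a`. Integrating `8 / a`
over the annulus in `x` gives a multiple of `L`, hence `J_{R,1} ≤ 32 W / L`, which is of order
`(log R) ^ (δ - 1)`.
-/

open Set Real
open scoped ENNReal

-- The logarithmic mean dominates the geometric mean: with `x = s²`, `y = t²` and
-- `u = log s - log t`, this is `|u| ≤ |sinh u|`.
theorem sq_log_sub_log_le {x y : ℝ} (hx : 0 < x) (hy : 0 < y) :
    (log x - log y) ^ 2 ≤ (x - y) ^ 2 / (x * y) := by
  obtain ⟨s, hs, rfl⟩ : ∃ s, 0 < s ∧ x = s ^ 2 := ⟨√x, sqrt_pos.2 hx, (sq_sqrt hx.le).symm⟩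
  obtain ⟨t, ht, rfl⟩ : ∃ t, 0 < t ∧ y = t ^ 2 := ⟨√y, sqrt_pos.2 hy, (sq_sqrt hy.le).symm⟩
  set u := log s - log t
  have hlog : log (s ^ 2) - log (t ^ 2) = 2 * u := by
    simp only [u, log_pow]; ring
  have hsinh : (s ^ 2 - t ^ 2) ^ 2 / (s ^ 2 * t ^ 2) = (2 * sinh u) ^ 2 := by
    rw [sinh_eq, exp_sub, exp_neg, exp_sub, exp_log hs, exp_log ht]
    field_simp
  have habs : |u| ≤ |sinh u| := by
    rw [abs_sinh]; exact self_le_sinh_iff.2 (abs_nonneg u)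
  rw [hlog, hsinh, sq_le_sq, abs_mul, abs_mul]
  gcongr

noncomputable def logKernel (a b : ℝ) : ℝ := 4 / (√a * √b * (√a + √b) ^ 2)

theorem logKernel_nonneg (a b : ℝ) : 0 ≤ logKernel a b := by
  unfold logKernel; positivity

theorem sq_log_sub_log_le_logKernel {a b : ℝ} (ha : 0 < a) (hb : 0 < b) :
    (log a - log b) ^ 2 ≤ (a - b) ^ 2 * logKernel a b := by
  have hs := sqrt_pos.2 ha
  have ht := sqrt_pos.2 hb
  have key := sq_log_sub_log_le hs ht
  rw [log_sqrt ha.le, log_sqrt hb.le] at key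
  have hab : a - b = (√a - √b) * (√a + √b) := by
    linear_combination -sq_sqrt ha.le + sq_sqrt hb.le
  calc (log a - log b) ^ 2 = 4 * (log a / 2 - log b / 2) ^ 2 := by ring
    _ ≤ 4 * ((√a - √b) ^ 2 / (√a * √b)) := by gcongr
    _ = (a - b) ^ 2 * logKernel a b := by
      rw [hab]; unfold logKernel; field_simp

theorem sq_log_sub_log_div_le_logKernel {a b d : ℝ} (ha : 0 < a) (hb : 0 < b)
    (hd : |a - b| ≤ |d|) : ((log a - log b) / d) ^ 2 ≤ logKernel a b := by
  rcases eq_or_ne d 0 with rfl | hd0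
  · simpa using logKernel_nonneg a b
  have hd2 : (a - b) ^ 2 ≤ d ^ 2 := sq_le_sq.2 hd
  rw [div_pow, div_le_iff₀ (by positivity)]
  calc (log a - log b) ^ 2 ≤ (a - b) ^ 2 * logKernel a b := sq_log_sub_log_le_logKernel ha hb
    _ ≤ logKernel a b * d ^ 2 := by rw [mul_comm]; gcongr; exact logKernel_nonneg a b

theorem lintegral_Ioo_ofReal_eq_sub {F f : ℝ → ℝ} {m M : ℝ} (hmM : m ≤ M)
    (hcont : ContinuousOn F (Icc m M)) (hderiv : ∀ u ∈ Ioo m M, HasDerivAt F (f u) u)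
    (hf : ∀ u ∈ Ioo m M, 0 ≤ f u) :
    ∫⁻ u in Ioo m M, ENNReal.ofReal (f u) = ENNReal.ofReal (F M - F m) := by
  have hint := intervalIntegral.integrableOn_deriv_of_nonneg hcont hderiv hf
  rw [← ofReal_integral_eq_lintegral_ofReal (hint.mono_set Ioo_subset_Ioc_self)
    (ae_restrict_of_forall_mem measurableSet_Ioo hf), ← integral_Ioc_eq_integral_Ioo,
    ← intervalIntegral.integral_of_le hmM,
    intervalIntegral.integral_eq_sub_of_hasDerivAt_of_le hmM hcont hderiv
      ((intervalIntegrable_iff_integrableOn_Ioc_of_le hmM).2 hint)]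

theorem lintegral_logKernel_le {a m M : ℝ} (ha : 0 < a) (hm : 0 ≤ m) (hmM : m ≤ M) :
    ∫⁻ u in Ioo m M, ENNReal.ofReal (logKernel a u) ≤ ENNReal.ofReal (8 / a) := by
  have hs := sqrt_pos.2 ha
  set F : ℝ → ℝ := fun u => -8 * (√a * (√a + √u))⁻¹
  have hderiv : ∀ u ∈ Ioo m M, HasDerivAt F (logKernel a u) u := by
    intro u hu
    have hu : 0 < u := hm.trans_lt hu.1
    have hsu := sqrt_pos.2 hu
    refine (((((hasDerivAt_sqrt hu.ne').const_add √a).const_mul √a).inv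
      (by positivity)).const_mul (-8)).congr_deriv ?_
    unfold logKernel; field_simp; ring
  have hcont : ContinuousOn F (Icc m M) :=
    continuousOn_const.mul (ContinuousOn.inv₀ (by fun_prop) fun u _ => by positivity)
  rw [lintegral_Ioo_ofReal_eq_sub hmM hcont hderiv fun u _ => logKernel_nonneg a u]
  apply ENNReal.ofReal_le_ofReal
  have hM : 0 ≤ 8 / (√a * (√a + √M)) := by positivity
  calc F M - F m = 8 / (√a * (√a + √m)) - 8 / (√a * (√a + √M)) := by simp only [F]; ring
    _ ≤ 8 / (√a * (√a + √m)) := by linarith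
    _ ≤ 8 / (√a * √a) := by gcongr; linarith [sqrt_nonneg m]
    _ = 8 / a := by rw [mul_self_sqrt ha.le]

def annulus (r R : ℝ) : Set ℝ := {y | r < |y| ∧ |y| < R}

theorem lintegral_annulus_comp_abs {r R : ℝ} (hr : 0 ≤ r) (h : ℝ → ℝ≥0∞) :
    ∫⁻ y in annulus r R, h |y| = 2 * ∫⁻ t in Ioo r R, h t := by
  have hsplit : annulus r R = Neg.neg ⁻¹' Ioo r R ∪ Ioo r R := by
    ext y
    simp only [annulus, mem_ofPred_eq, mem_union, mem_preimage, mem_Ioo]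
    rcases le_or_gt 0 y with hy | hy
    · rw [abs_of_nonneg hy]; constructor
      · exact Or.inr
      · rintro (h | h) <;> constructor <;> linarith [h.1, h.2]
    · rw [abs_of_neg hy]; constructor
      · exact Or.inl
      · rintro (h | h) <;> constructor <;> linarith [h.1, h.2]
  have hdisj : Disjoint (Neg.neg ⁻¹' Ioo r R) (Ioo r R) := by
    rw [Set.disjoint_left]
    rintro y ⟨h1, -⟩ ⟨h3, -⟩
    linarith
  have hpos : ∫⁻ y in Ioo r R, h |y| = ∫⁻ t in Ioo r R, h t :=
    setLIntegral_congr_fun measurableSet_Ioo fun y hy => by rw [abs_of_pos (hr.trans_lt hy.1)]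
  have hneg : ∫⁻ y in Neg.neg ⁻¹' Ioo r R, h |y| = ∫⁻ y in Ioo r R, h |y| := by
    simpa only [abs_neg] using (Measure.measurePreserving_neg volume).setLIntegral_comp_preimage_emb
      measurableEmbedding_neg (fun t => h |t|) (Ioo r R)
  rw [hsplit, lintegral_union measurableSet_Ioo hdisj, hneg, hpos, two_mul]

theorem lintegral_annulus_comp {r R : ℝ} (hr : 0 ≤ r) (h : ℝ → ℝ≥0∞) :
    ∫⁻ y in annulus r R, h (1 + |y| - r) = 2 * ∫⁻ v in Ioo 1 (1 + R - r), h v := by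
  rw [lintegral_annulus_comp_abs hr fun t => h (1 + t - r)]
  have hshift := (measurePreserving_add_right volume (1 - r)).setLIntegral_comp_preimage_emb
    (measurableEmbedding_addRight _) h (Ioo 1 (1 + R - r))
  rw [preimage_add_const_Ioo, sub_sub_cancel, show 1 + R - r - (1 - r) = R by ring] at hshift
  rw [← hshift]
  congr 2
  funext t
  ring_nf

theorem phiCut_of_mem_annulus {r R x : ℝ} (hx : x ∈ annulus r R) :
    phiCut r R x = 1 - log (1 + |x| - r) / log (1 + R - r) := by
  rw [phiCut, if_neg (not_le.2 hx.1), if_pos hx.2]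

theorem sq_phiCut_sub_div_le {r R x y : ℝ} (hx : x ∈ annulus r R) (hy : y ∈ annulus r R) :
    ((phiCut r R x - phiCut r R y) / (x - y)) ^ 2 ≤
      logKernel (1 + |x| - r) (1 + |y| - r) / log (1 + R - r) ^ 2 := by
  rw [phiCut_of_mem_annulus hx, phiCut_of_mem_annulus hy]
  have hsq : ((1 - log (1 + |x| - r) / log (1 + R - r) -
      (1 - log (1 + |y| - r) / log (1 + R - r))) / (x - y)) ^ 2 =
      ((log (1 + |x| - r) - log (1 + |y| - r)) / (x - y)) ^ 2 / log (1 + R - r) ^ 2 := by ring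
  have hd : |(1 + |x| - r) - (1 + |y| - r)| ≤ |x - y| := by
    rw [show (1 + |x| - r) - (1 + |y| - r) = |x| - |y| by ring]
    exact abs_abs_sub_abs_le_abs_sub x y
  rw [hsq]
  gcongr
  exact sq_log_sub_log_div_le_logKernel (by linarith [hx.1]) (by linarith [hy.1]) hd

theorem one_add_log_rpow_le {r R δ x y : ℝ} (hδ : 0 ≤ δ) (hx : x ∈ annulus r R) (hy : y ∈ annulus r R) :
    1 + log (1 + |x - y|) ^ δ ≤ 1 + log (1 + 2 * R) ^ δ := by
  have hxy : |x - y| ≤ 2 * R := by linarith [abs_sub x y, hx.2, hy.2]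
  have h0 := abs_nonneg (x - y)
  gcongr
  exact log_nonneg (by linarith)

theorem Jint_annulus_le {r R δ : ℝ} (hr : 0 ≤ r) (hrR : r < R) (hδ : 0 ≤ δ) :
    Jint r R δ (annulus r R ×ˢ annulus r R) ≤
      ENNReal.ofReal (32 * (1 + log (1 + 2 * R) ^ δ) / log (1 + R - r)) := by
  set L := log (1 + R - r)
  set W := 1 + log (1 + 2 * R) ^ δ
  have hL : 0 < L := log_pos (by linarith)
  have hW : 0 ≤ W := by
    have := rpow_nonneg (log_nonneg (by linarith : (1 : ℝ) ≤ 1 + 2 * R)) δ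
    positivity
  set k : ℝ × ℝ → ℝ≥0∞ := fun p => ENNReal.ofReal (logKernel (1 + |p.1| - r) (1 + |p.2| - r))
  have hk : Measurable k := by simp only [k, logKernel]; fun_prop
  have hpoint : ∀ p ∈ annulus r R ×ˢ annulus r R,
      ENNReal.ofReal (((phiCut r R p.1 - phiCut r R p.2) / (p.1 - p.2)) ^ 2 *
        (1 + log (1 + |p.1 - p.2|) ^ δ)) ≤ ENNReal.ofReal (W / L ^ 2) * k p := by
    rintro ⟨x, y⟩ ⟨hx, hy⟩
    rw [← ENNReal.ofReal_mul (by positivity)]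
    apply ENNReal.ofReal_le_ofReal
    have hw := rpow_nonneg (log_nonneg (by linarith [abs_nonneg (x - y)] :
      (1 : ℝ) ≤ 1 + |x - y|)) δ
    have hk0 := logKernel_nonneg (1 + |x| - r) (1 + |y| - r)
    calc _ ≤ logKernel (1 + |x| - r) (1 + |y| - r) / L ^ 2 * W :=
          mul_le_mul (sq_phiCut_sub_div_le hx hy) (one_add_log_rpow_le hδ hx hy) (by positivity)
            (by positivity)
      _ = W / L ^ 2 * logKernel (1 + |x| - r) (1 + |y| - r) := by ring
  have hinner : ∀ x ∈ annulus r R,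
      ∫⁻ y in annulus r R, k (x, y) ≤ ENNReal.ofReal (16 / (1 + |x| - r)) := by
    intro x hx
    have ha : 0 < 1 + |x| - r := by linarith [hx.1]
    rw [lintegral_annulus_comp hr fun v => ENNReal.ofReal (logKernel (1 + |x| - r) v)]
    calc 2 * ∫⁻ v in Ioo 1 (1 + R - r), ENNReal.ofReal (logKernel (1 + |x| - r) v)
        ≤ ENNReal.ofReal 2 * ENNReal.ofReal (8 / (1 + |x| - r)) := by
          rw [ENNReal.ofReal_ofNat]
          gcongr
          exact lintegral_logKernel_le ha zero_le_one (by linarith)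
      _ = ENNReal.ofReal (16 / (1 + |x| - r)) := by
          rw [← ENNReal.ofReal_mul zero_le_two]
          congr 1
          ring
  have houter : ∫⁻ x in annulus r R, ENNReal.ofReal (16 / (1 + |x| - r)) =
      ENNReal.ofReal (32 * L) := by
    have hcont : ContinuousOn (fun v => 16 * log v) (Icc 1 (1 + R - r)) :=
      continuousOn_const.mul (continuousOn_log.mono fun v hv hv0 => by
        simp only [mem_singleton_iff] at hv0; linarith [hv.1])
    have hderiv : ∀ v ∈ Ioo 1 (1 + R - r), HasDerivAt (fun v => 16 * log v) (16 / v) v :=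
      fun v hv => ((hasDerivAt_log (by linarith [hv.1])).const_mul 16).congr_deriv
        (div_eq_mul_inv 16 v).symm
    rw [lintegral_annulus_comp hr fun v => ENNReal.ofReal (16 / v),
      lintegral_Ioo_ofReal_eq_sub (by linarith) hcont hderiv
        (fun v hv => by have := hv.1; positivity),
      log_one, ← ENNReal.ofReal_ofNat, ← ENNReal.ofReal_mul zero_le_two]
    congr 1
    ring
  calc Jint r R δ (annulus r R ×ˢ annulus r R)
      ≤ ∫⁻ p in annulus r R ×ˢ annulus r R, ENNReal.ofReal (W / L ^ 2) * k p :=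
        setLIntegral_mono (hk.const_mul _) hpoint
    _ = ENNReal.ofReal (W / L ^ 2) * ∫⁻ x in annulus r R, ∫⁻ y in annulus r R, k (x, y) := by
        rw [lintegral_const_mul _ hk, Measure.volume_eq_prod, setLIntegral_prod _ hk.aemeasurable]
    _ ≤ ENNReal.ofReal (W / L ^ 2) * ∫⁻ x in annulus r R, ENNReal.ofReal (16 / (1 + |x| - r)) := by
        gcongr ENNReal.ofReal (W / L ^ 2) * ?_
        exact setLIntegral_mono (by fun_prop) hinner
    _ = ENNReal.ofReal (32 * W / L) := by
        rw [houter, ← ENNReal.ofReal_mul (by positivity)]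
        congr 1
        field_simp

theorem weight_div_log_le {r R δ : ℝ} (hδ : δ ∈ Ioo 0 1) (hR : 3 ≤ R) (hrR : 2 * r ≤ R) :
    32 * (1 + log (1 + 2 * R) ^ δ) / log (1 + R - r) ≤ 256 / log R ^ (1 - δ) := by
  have hlogR : 1 ≤ log R := by
    rw [le_log_iff_exp_le (by linarith)]; linarith [exp_one_lt_d9]
  have hW : 1 + log (1 + 2 * R) ^ δ ≤ 4 * log R ^ δ := by
    have h3 : log (1 + 2 * R) ≤ 3 * log R := by
      have hR2 : 9 ≤ R ^ 2 := by nlinarith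
      calc log (1 + 2 * R) ≤ log (R ^ 3) := log_le_log (by linarith) (by nlinarith)
        _ = 3 * log R := by rw [log_pow]; norm_num
    have hδ0 := hδ.1.le
    have h3δ : (3 : ℝ) ^ δ ≤ 3 := by
      simpa using rpow_le_rpow_of_exponent_le (by norm_num : (1 : ℝ) ≤ 3) hδ.2.le
    calc 1 + log (1 + 2 * R) ^ δ ≤ log R ^ δ + (3 * log R) ^ δ := by
          gcongr
          · exact one_le_rpow hlogR hδ.1.le
          · exact log_nonneg (by linarith)
      _ = log R ^ δ + 3 ^ δ * log R ^ δ := by rw [mul_rpow (by norm_num) (by linarith)]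
      _ ≤ log R ^ δ + 3 * log R ^ δ := by gcongr
      _ = 4 * log R ^ δ := by ring
  have hL : log R ≤ 2 * log (1 + R - r) := by
    calc log R ≤ log ((1 + R - r) ^ 2) := log_le_log (by linarith) (by nlinarith)
      _ = 2 * log (1 + R - r) := by rw [log_pow]; norm_num
  calc 32 * (1 + log (1 + 2 * R) ^ δ) / log (1 + R - r)
      ≤ 32 * (4 * log R ^ δ) / (log R / 2) :=
        div_le_div₀ (by positivity) (by linarith) (by linarith) (by linarith)
    _ = 256 / log R ^ (1 - δ) := by
        rw [rpow_sub (by linarith), rpow_one]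
        field_simp
        ring

/-- For fixed `0 < r` and `δ ∈ (0,1)`, the integral `J_{R,1}` of
`[(φ^{(r,R)}(x)-φ^{(r,R)}(y))/(x-y)]² [1 + log^δ(1+|x-y|)]` over
`D₁(r,R) = {r < |x| < R, r < |y| < R}` satisfies `J_{R,1} ≤ C / (log R)^{1-δ}` for
some `C > 0` and all `R ≥ R₀ > r`; in particular `J_{R,1} → 0` as `R → ∞`. -/
theorem stmt15 (r δ : ℝ) (hr : 0 < r) (hδ : δ ∈ Set.Ioo (0 : ℝ) 1) :
    (∃ C > (0 : ℝ), ∃ R₀ > r, ∀ R ≥ R₀,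
        Jint r R δ {p : ℝ × ℝ | (r < |p.1| ∧ |p.1| < R) ∧ r < |p.2| ∧ |p.2| < R} ≤
          ENNReal.ofReal (C / Real.log R ^ (1 - δ))) ∧
      Filter.Tendsto
        (fun R : ℝ =>
          Jint r R δ {p : ℝ × ℝ | (r < |p.1| ∧ |p.1| < R) ∧ r < |p.2| ∧ |p.2| < R})
        Filter.atTop (nhds 0) := by
  have hbound : ∀ R ≥ 2 * r + 3,
      Jint r R δ (annulus r R ×ˢ annulus r R) ≤ ENNReal.ofReal (256 / log R ^ (1 - δ)) :=
    fun R hR => (Jint_annulus_le hr.le (by linarith) hδ.1.le).trans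
      (ENNReal.ofReal_le_ofReal (weight_div_log_le hδ (by linarith) (by linarith)))
  refine ⟨⟨256, by norm_num, 2 * r + 3, by linarith, hbound⟩, ?_⟩
  have hlim : Filter.Tendsto (fun R => ENNReal.ofReal (256 / log R ^ (1 - δ)))
      Filter.atTop (nhds 0) := by
    rw [← ENNReal.ofReal_zero]
    exact ENNReal.tendsto_ofReal (tendsto_const_nhds.div_atTop
      ((tendsto_rpow_atTop (sub_pos.2 hδ.2)).comp tendsto_log_atTop))
  exact tendsto_of_tendsto_of_tendsto_of_le_of_le' tendsto_const_nhds hlim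
    (Filter.Eventually.of_forall fun _ => bot_le) (Filter.eventually_ge_atTop _ |>.mono hbound)
end

section
/- Fix 0 < r < ∞ and 0 < δ < 1, and for R > r define φ^{(r,R)} : ℝ → ℝ by φ^{(r,R)}(x) = 1 for |x| ≤ r, φ^{(r,R)}(x) = 1 - log(1+|x|-r)/log(1+R-r) for r < |x| < R, and φ^{(r,R)}(x) = 0 for |x| ≥ R. Let J_{R,2} denote the integral of [(φ^{(r,R)}(x) - φ^{(r,R)}(y))/(x-y)]² · [1 + (log(1+|x-y|))^δ] over the domain D_2(r,R) = {(x,y) ∈ ℝ² : |x| < r < |y| < R}. Then J_{R,2} ≤ (4r·[1 + (log(1+R+r))^δ]/(log(1+R-r))²) · ∫_0^∞ (log(1+t)/t)² dt; in particular there exist constants C > 0 and R_0 > r such that J_{R,2} ≤ C/(log R)^{2-δ} for all R ≥ R_0, so J_{R,2} → 0 as R → ∞. -/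
/-!
On `D₂(r,R)` we have `φ(x) = 1`, so `φ(x) - φ(y) = log(1 + |y| - r) / log(1 + R - r)`, while
`|y| - r ≤ |x - y| < R + r`. Hence the integrand is at most
`(1 + log^δ(1+R+r)) / log²(1+R-r) · G(|y| - r)` with `G(t) = (log(1+t)/t)²`, which does not
depend on `x`. Integrating over `x ∈ (-r, r)` gives the factor `2r`, and over `r < |y|` the
reflection `y ↦ -y` and the shift `y ↦ y - r` give `2 ∫₀^∞ G`; `G` is integrable since it is
bounded by `1` and by `16 t^{-3/2}`. For `R ≥ 2r + 3` the prefactor is at most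
`48 r / (log R)^{2-δ}`, because `log(1+R-r) ≥ ½ log R` and `log(1+R+r) ≤ 2 log R`.
-/

open MeasureTheory

open Set Real Filter Topology
open scoped ENNReal

lemma log_one_add_le_four_mul_rpow {t : ℝ} (ht : 0 ≤ t) :
    log (1 + t) ≤ 4 * t ^ (1 / 4 : ℝ) := by
  have hpos : 0 < (1 + t) ^ (1 / 4 : ℝ) := by positivity
  have hsub : (1 + t) ^ (1 / 4 : ℝ) ≤ 1 + t ^ (1 / 4 : ℝ) := by
    simpa using rpow_add_le_add_rpow zero_le_one ht (p := 1 / 4) (by norm_num) (by norm_num)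
  calc log (1 + t) = 4 * log ((1 + t) ^ (1 / 4 : ℝ)) := by
        rw [log_rpow (by linarith)]; ring
    _ ≤ 4 * ((1 + t) ^ (1 / 4 : ℝ) - 1) := by gcongr; exact log_le_sub_one_of_pos hpos
    _ ≤ 4 * t ^ (1 / 4 : ℝ) := by linarith

lemma log_one_add_div_self_sq_le_one {t : ℝ} (ht : 0 < t) : (log (1 + t) / t) ^ 2 ≤ 1 := by
  have hlog : log (1 + t) ≤ t := by linarith [log_le_sub_one_of_pos (x := 1 + t) (by linarith)]
  have hlog₀ : 0 ≤ log (1 + t) := log_nonneg (by linarith)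
  exact pow_le_one₀ (by positivity) ((div_le_one ht).2 hlog)

lemma log_one_add_div_self_sq_le_rpow {t : ℝ} (ht : 0 < t) :
    (log (1 + t) / t) ^ 2 ≤ 16 * t ^ (-3 / 2 : ℝ) := by
  have hlog₀ : 0 ≤ log (1 + t) := log_nonneg (by linarith)
  have hsq : (t ^ (1 / 4 : ℝ)) ^ 2 = t ^ (1 / 2 : ℝ) := by
    rw [← rpow_natCast, ← rpow_mul ht.le]; norm_num
  have hrpow : t ^ (-3 / 2 : ℝ) = t ^ (1 / 2 : ℝ) / t ^ 2 := by
    rw [← rpow_natCast, ← rpow_sub ht]; norm_num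
  calc (log (1 + t) / t) ^ 2 = log (1 + t) ^ 2 / t ^ 2 := div_pow _ _ _
    _ ≤ (4 * t ^ (1 / 4 : ℝ)) ^ 2 / t ^ 2 := by
        gcongr; exact log_one_add_le_four_mul_rpow ht.le
    _ = 16 * t ^ (-3 / 2 : ℝ) := by rw [hrpow, mul_pow, hsq]; ring

lemma integrableOn_log_one_add_div_self_sq :
    IntegrableOn (fun t : ℝ => (log (1 + t) / t) ^ 2) (Ioi 0) := by
  have hmeas : AEStronglyMeasurable (fun t : ℝ => (log (1 + t) / t) ^ 2) :=
    (by measurability : Measurable fun t : ℝ => (log (1 + t) / t) ^ 2).aestronglyMeasurable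
  have h₁ : IntegrableOn (fun t : ℝ => (log (1 + t) / t) ^ 2) (Ioc 0 1) := by
    refine Integrable.mono' (integrableOn_const (C := (1 : ℝ)) measure_Ioc_lt_top.ne)
      hmeas.restrict ((ae_restrict_iff' measurableSet_Ioc).2 (.of_forall fun t ht => ?_))
    rw [norm_of_nonneg (sq_nonneg _)]
    exact log_one_add_div_self_sq_le_one ht.1
  have h₂ : IntegrableOn (fun t : ℝ => (log (1 + t) / t) ^ 2) (Ioi 1) := by
    refine Integrable.mono'
      ((integrableOn_Ioi_rpow_of_lt (a := -3 / 2) (by norm_num) one_pos).const_mul 16)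
      hmeas.restrict ((ae_restrict_iff' measurableSet_Ioi).2 (.of_forall fun t ht => ?_))
    rw [norm_of_nonneg (sq_nonneg _)]
    exact log_one_add_div_self_sq_le_rpow (zero_lt_one.trans ht)
  simpa only [Ioc_union_Ioi_eq_Ioi zero_le_one] using h₁.union h₂

lemma lintegral_comp_abs (f : ℝ → ℝ≥0∞) : ∫⁻ x, f |x| = 2 * ∫⁻ x in Ioi 0, f x := by
  have hneg : ∫⁻ x in Iic 0, f |x| = ∫⁻ x in Ioi 0, f x := by
    calc ∫⁻ x in Iic 0, f |x| = ∫⁻ x in Iic 0, f (-x) :=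
          setLIntegral_congr_fun measurableSet_Iic fun x hx => by rw [abs_of_nonpos hx]
      _ = ∫⁻ x in Ici 0, f x := by
          simpa using (Measure.measurePreserving_neg volume).setLIntegral_comp_preimage_emb
            (Homeomorph.neg ℝ).measurableEmbedding f (Ici 0)
      _ = ∫⁻ x in Ioi 0, f x := setLIntegral_congr Ioi_ae_eq_Ici.symm
  have hpos : ∫⁻ x in Ioi 0, f |x| = ∫⁻ x in Ioi 0, f x :=
    setLIntegral_congr_fun measurableSet_Ioi fun x hx => by rw [abs_of_pos hx]
  rw [← lintegral_add_compl _ measurableSet_Iic, compl_Iic, hneg, hpos, two_mul]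

lemma setLIntegral_Ioi_comp_sub (f : ℝ → ℝ≥0∞) (a : ℝ) :
    ∫⁻ x in Ioi a, f (x - a) = ∫⁻ t in Ioi 0, f t := by
  simpa using (measurePreserving_sub_right volume a).setLIntegral_comp_preimage_emb
    (measurableEmbedding_subRight a) f (Ioi 0)

lemma setLIntegral_lt_abs_comp_abs_sub {a : ℝ} (ha : 0 ≤ a) (f : ℝ → ℝ≥0∞) :
    ∫⁻ y in {y | a < |y|}, f (|y| - a) = 2 * ∫⁻ t in Ioi 0, f t := by
  have hind : ∀ y : ℝ, {y | a < |y|}.indicator (fun y => f (|y| - a)) y =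
      (Ioi a).indicator (fun s => f (s - a)) |y| := fun y => by
    by_cases h : a < |y| <;> simp [indicator, h]
  rw [← lintegral_indicator (measurableSet_lt measurable_const measurable_abs)]
  simp_rw [hind]
  rw [lintegral_comp_abs, setLIntegral_indicator measurableSet_Ioi,
    inter_eq_left.2 (Ioi_subset_Ioi ha), setLIntegral_Ioi_comp_sub]

lemma setLIntegral_prod_comp_snd {α β : Type*} [MeasurableSpace α] [MeasurableSpace β]
    {μ : Measure α} {ν : Measure β} [SFinite μ] [SFinite ν] (s : Set α) (t : Set β)
    {g : β → ℝ≥0∞} (hg : Measurable g) :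
    ∫⁻ z in s ×ˢ t, g z.2 ∂μ.prod ν = μ s * ∫⁻ y in t, g y ∂ν := by
  rw [setLIntegral_prod (fun z : α × β => g z.2) (hg.comp measurable_snd).aemeasurable]
  exact (setLIntegral_const s (∫⁻ y in t, g y ∂ν)).trans (mul_comm _ _)

section PhiCut

variable {r R x : ℝ}

lemma phiCut_of_abs_le (hx : |x| ≤ r) : phiCut r R x = 1 := if_pos hx

lemma phiCut_of_lt_abs_of_abs_lt (hrx : r < |x|) (hxR : |x| < R) :
    phiCut r R x = 1 - log (1 + |x| - r) / log (1 + R - r) := by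
  rw [phiCut, if_neg hrx.not_ge, if_pos hxR]

lemma sq_phiCut_slope_mul_weight_le {y δ : ℝ} (hδ : 0 ≤ δ) (hx : |x| < r) (hy : r < |y|)
    (hyR : |y| < R) :
    ((phiCut r R x - phiCut r R y) / (x - y)) ^ 2 * (1 + log (1 + |x - y|) ^ δ) ≤
      (1 + log (1 + R + r) ^ δ) / log (1 + R - r) ^ 2 *
        (log (1 + (|y| - r)) / (|y| - r)) ^ 2 := by
  have hxy : |y| - r ≤ |x - y| := by
    linarith [abs_sub_abs_le_abs_sub y x, abs_sub_comm y x]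
  have hlog : 0 ≤ log (1 + |x - y|) := log_nonneg (by linarith [abs_nonneg (x - y)])
  have hweight : log (1 + |x - y|) ^ δ ≤ log (1 + R + r) ^ δ :=
    rpow_le_rpow hlog (log_le_log (by positivity) (by linarith [abs_sub x y])) hδ
  rw [phiCut_of_abs_le hx.le, phiCut_of_lt_abs_of_abs_lt hy hyR, ← sq_abs (_ / _), abs_div,
    ← add_sub_assoc]
  set a := log (1 + |y| - r)
  set L := log (1 + R - r)
  calc (|1 - (1 - a / L)| / |x - y|) ^ 2 * (1 + log (1 + |x - y|) ^ δ)
      = (a / L) ^ 2 / |x - y| ^ 2 * (1 + log (1 + |x - y|) ^ δ) := by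
        rw [sub_sub_cancel, div_pow, sq_abs]
    _ ≤ (a / L) ^ 2 / (|y| - r) ^ 2 * (1 + log (1 + R + r) ^ δ) := by
        have := rpow_nonneg hlog δ
        gcongr
    _ = (1 + log (1 + R + r) ^ δ) / L ^ 2 * (a / (|y| - r)) ^ 2 := by
        rw [div_pow a (|y| - r)]; ring

end PhiCut

lemma Jint_D2_le {r R δ : ℝ} (hr : 0 < r) (hR : r < R) (hδ : 0 ≤ δ) :
    Jint r R δ {p : ℝ × ℝ | |p.1| < r ∧ r < |p.2| ∧ |p.2| < R} ≤
      ENNReal.ofReal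
        (4 * r * (1 + log (1 + R + r) ^ δ) / log (1 + R - r) ^ 2 *
          ∫ t in Ioi (0 : ℝ), (log (1 + t) / t) ^ 2) := by
  set K := (1 + log (1 + R + r) ^ δ) / log (1 + R - r) ^ 2 with hK_def
  set G : ℝ → ℝ≥0∞ := fun t => ENNReal.ofReal ((log (1 + t) / t) ^ 2)
  have hK : 0 ≤ K := by
    have := rpow_nonneg (log_nonneg (show 1 ≤ 1 + R + r by linarith)) δ
    positivity
  have hI : ∫⁻ t in Ioi 0, G t = ENNReal.ofReal (∫ t in Ioi (0 : ℝ), (log (1 + t) / t) ^ 2) :=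
    (ofReal_integral_eq_lintegral_ofReal integrableOn_log_one_add_div_self_sq
      (.of_forall fun _ => sq_nonneg _)).symm
  calc Jint r R δ {p : ℝ × ℝ | |p.1| < r ∧ r < |p.2| ∧ |p.2| < R}
      ≤ ∫⁻ p in {p : ℝ × ℝ | |p.1| < r ∧ r < |p.2| ∧ |p.2| < R},
          ENNReal.ofReal K * G (|p.2| - r) := by
        refine setLIntegral_mono (by fun_prop) fun p ⟨hx, hy, hyR⟩ => ?_
        rw [← ENNReal.ofReal_mul hK]
        exact ENNReal.ofReal_le_ofReal (sq_phiCut_slope_mul_weight_le hδ hx hy hyR)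
    _ ≤ ∫⁻ p in Ioo (-r) r ×ˢ {y | r < |y|}, ENNReal.ofReal K * G (|p.2| - r) :=
        lintegral_mono_set fun p ⟨hx, hy, _⟩ => ⟨abs_lt.1 hx, hy⟩
    _ = ENNReal.ofReal K * (ENNReal.ofReal (2 * r) * (2 * ∫⁻ t in Ioi 0, G t)) := by
        rw [Measure.volume_eq_prod,
          setLIntegral_prod_comp_snd (g := fun y => ENNReal.ofReal K * G (|y| - r)) _ _
            (by fun_prop),
          lintegral_const_mul' _ _ ENNReal.ofReal_ne_top,
          setLIntegral_lt_abs_comp_abs_sub hr.le, Real.volume_Ioo, sub_neg_eq_add, two_mul r]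
        ring
    _ = _ := by
        rw [hI, ← ENNReal.ofReal_ofNat 2, ← ENNReal.ofReal_mul zero_le_two,
          ← ENNReal.ofReal_mul (by positivity), ← ENNReal.ofReal_mul hK, hK_def]
        ring_nf

lemma log_le_two_mul_log_one_add_sub {r R : ℝ} (hR : 0 < R) (hrR : 2 * r ≤ R) :
    log R ≤ 2 * log (1 + R - r) := by
  have := log_le_log hR (show R ≤ (1 + R - r) ^ 2 by nlinarith)
  rwa [log_pow, Nat.cast_ofNat] at this

lemma log_one_add_add_le_two_mul_log {r R : ℝ} (hr : 0 ≤ r) (hR : 2 ≤ R) (hrR : 2 * r ≤ R) :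
    log (1 + R + r) ≤ 2 * log R := by
  have := log_le_log (by linarith) (show 1 + R + r ≤ R ^ 2 by nlinarith)
  rwa [log_pow, Nat.cast_ofNat] at this

lemma cutoff_constant_le_div_log_rpow {r R δ : ℝ} (hr : 0 ≤ r) (hδ₀ : 0 ≤ δ) (hδ₁ : δ ≤ 1)
    (hR : 2 * r + 3 ≤ R) :
    4 * r * (1 + log (1 + R + r) ^ δ) / log (1 + R - r) ^ 2 ≤ 48 * r / log R ^ (2 - δ) := by
  have hv : 1 ≤ log R := (le_log_iff_exp_le (by linarith)).2 (by linarith [exp_one_lt_three])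
  have hL : log R / 2 ≤ log (1 + R - r) := by
    linarith [log_le_two_mul_log_one_add_sub (r := r) (R := R) (by linarith) (by linarith)]
  have hM : 1 + log (1 + R + r) ^ δ ≤ 3 * log R ^ δ := by
    have h₁ : log (1 + R + r) ^ δ ≤ 2 ^ δ * log R ^ δ := by
      rw [← mul_rpow zero_le_two (by linarith)]
      exact rpow_le_rpow (log_nonneg (by linarith))
        (log_one_add_add_le_two_mul_log hr (by linarith) (by linarith)) hδ₀
    have h₂ : (2 : ℝ) ^ δ ≤ 2 := by simpa using rpow_le_rpow_of_exponent_le one_le_two hδ₁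
    have h₃ : 1 ≤ log R ^ δ := one_le_rpow hv hδ₀
    nlinarith
  have hpow : log R ^ (2 - δ) = log R ^ 2 / log R ^ δ := by
    rw [rpow_sub (by linarith), rpow_two]
  calc 4 * r * (1 + log (1 + R + r) ^ δ) / log (1 + R - r) ^ 2
      ≤ 4 * r * (3 * log R ^ δ) / (log R / 2) ^ 2 := by gcongr
    _ = 48 * r / log R ^ (2 - δ) := by
        rw [hpow]
        field_simp
        ring

/-- For fixed `0 < r` and `δ ∈ (0,1)`, the integral `J_{R,2}` of
`[(φ^{(r,R)}(x)-φ^{(r,R)}(y))/(x-y)]² [1 + log^δ(1+|x-y|)]` over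
`D₂(r,R) = {|x| < r < |y| < R}` satisfies
`J_{R,2} ≤ (4r[1 + log^δ(1+R+r)]/log²(1+R-r)) ∫₀^∞ (log(1+t)/t)² dt` for `R > r`;
in particular `J_{R,2} ≤ C/(log R)^{2-δ}` for some `C > 0` and all `R ≥ R₀ > r`,
so `J_{R,2} → 0` as `R → ∞`. -/
theorem stmt16 (r δ : ℝ) (hr : 0 < r) (hδ : δ ∈ Set.Ioo (0 : ℝ) 1) :
    (∀ R > r,
        Jint r R δ {p : ℝ × ℝ | |p.1| < r ∧ r < |p.2| ∧ |p.2| < R} ≤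
          ENNReal.ofReal
            (4 * r * (1 + Real.log (1 + R + r) ^ δ) / Real.log (1 + R - r) ^ 2 *
              ∫ t in Set.Ioi (0 : ℝ), (Real.log (1 + t) / t) ^ 2)) ∧
      (∃ C > (0 : ℝ), ∃ R₀ > r, ∀ R ≥ R₀,
        Jint r R δ {p : ℝ × ℝ | |p.1| < r ∧ r < |p.2| ∧ |p.2| < R} ≤
          ENNReal.ofReal (C / Real.log R ^ (2 - δ))) ∧
      Filter.Tendsto
        (fun R : ℝ => Jint r R δ {p : ℝ × ℝ | |p.1| < r ∧ r < |p.2| ∧ |p.2| < R})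
        Filter.atTop (nhds 0) := by
  obtain ⟨hδ₀, hδ₁⟩ := hδ
  set I := ∫ t in Ioi (0 : ℝ), (log (1 + t) / t) ^ 2
  have hI : 0 ≤ I := setIntegral_nonneg measurableSet_Ioi fun t _ => sq_nonneg _
  set C := 48 * r * I + 1
  have hrate : ∀ R ≥ 2 * r + 3,
      Jint r R δ {p : ℝ × ℝ | |p.1| < r ∧ r < |p.2| ∧ |p.2| < R} ≤
        ENNReal.ofReal (C / log R ^ (2 - δ)) := fun R hR =>
    (Jint_D2_le hr (by linarith) hδ₀.le).trans <| ENNReal.ofReal_le_ofReal <| calc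
      _ ≤ 48 * r / log R ^ (2 - δ) * I :=
        mul_le_mul_of_nonneg_right (cutoff_constant_le_div_log_rpow hr.le hδ₀.le hδ₁.le hR) hI
      _ ≤ C / log R ^ (2 - δ) := by
        rw [div_mul_eq_mul_div]
        exact div_le_div_of_nonneg_right (by linarith) (rpow_nonneg (log_nonneg (by linarith)) _)
  have hlim : Tendsto (fun R => ENNReal.ofReal (C / log R ^ (2 - δ))) atTop (𝓝 0) := by
    simpa using ENNReal.tendsto_ofReal <| tendsto_const_nhds.div_atTop <|
      (tendsto_rpow_atTop (by linarith)).comp tendsto_log_atTop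
  refine ⟨fun R hR => Jint_D2_le hr hR hδ₀.le, ⟨C, by positivity, 2 * r + 3, by linarith, hrate⟩,
    tendsto_of_tendsto_of_tendsto_of_le_of_le' tendsto_const_nhds hlim
      (.of_forall fun _ => zero_le) ((eventually_ge_atTop _).mono hrate)⟩
end
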